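/- arXiv:1812.01100 — 4 statements merged into one kernel-verified Lean document; each statement's English description precedes it below -/
import Mathlib

section
/- Let K be a field and S = K[x1,x2,x3,x4]. Let W0 be the 6-dimensional subspace of quadrics spanned by the squarefree monomials x_i x_j with 1 ≤ i < j ≤ 4. Then the space W0^2 spanned by all products of two elements of W0 has dimension 19 (it is spanned by the 19 monomials of degree 4 in which every variable appears with exponent at most 2). -/
/-!
`W0` is spanned by the monomials whose exponents lie in `P = {eᵢ + eⱼ : i < j}`, so `W0 * W0` is
spanned by the monomials with exponents in the sumset `P + P`. This sumset is exactly the set of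
degree-4 exponents bounded by 2: `xᵢ²xⱼ² = (xᵢxⱼ)²`, `xᵢ²xⱼxₖ = (xᵢxⱼ)(xᵢxₖ)`,
`x₁x₂x₃x₄ = (x₁x₂)(x₃x₄)`. Distinct monomials are linearly independent, and there are
`6 + 12 + 1 = 19` such exponents.
-/

open MvPolynomial Finsupp
open scoped Pointwise

section Monomials

variable {σ R : Type*} [CommSemiring R]

theorem image_monomial_one_mul_image_monomial_one (A B : Set (σ →₀ ℕ)) :
    (fun m => monomial m (1 : R)) '' A * (fun m => monomial m (1 : R)) '' B =
      (fun m => monomial m (1 : R)) '' (A + B) := by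
  ext p
  simp only [Set.mem_mul, Set.mem_add, Set.mem_image]
  constructor
  · rintro ⟨_, ⟨a, ha, rfl⟩, _, ⟨b, hb, rfl⟩, rfl⟩
    exact ⟨a + b, ⟨a, ha, b, hb, rfl⟩, by rw [monomial_mul, one_mul]⟩
  · rintro ⟨_, ⟨a, ha, b, hb, rfl⟩, rfl⟩
    exact ⟨_, ⟨a, ha, rfl⟩, _, ⟨b, hb, rfl⟩, by rw [monomial_mul, one_mul]⟩

theorem span_monomial_one_mul_span_monomial_one (A B : Set (σ →₀ ℕ)) :
    Submodule.span R ((fun m => monomial m (1 : R)) '' A) *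
        Submodule.span R ((fun m => monomial m (1 : R)) '' B) =
      Submodule.span R ((fun m => monomial m (1 : R)) '' (A + B)) := by
  rw [Submodule.span_mul_span, image_monomial_one_mul_image_monomial_one]

theorem finrank_span_monomial_one {K : Type*} [Field K] (s : Finset (σ →₀ ℕ)) :
    Module.finrank K (Submodule.span K ((fun m => monomial m (1 : K)) '' (s : Set (σ →₀ ℕ)))) =
      s.card := by
  have hli : LinearIndependent K fun m : (s : Set (σ →₀ ℕ)) => monomial (m : σ →₀ ℕ) (1 : K) :=
    (basisMonomials σ K).linearIndependent.comp _ Subtype.coe_injective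
  rw [Set.image_eq_range, finrank_span_eq_card hli]
  simp

end Monomials

section Exponents

variable (σ : Type*)

def pairExponents [LinearOrder σ] : Set (σ →₀ ℕ) :=
  {m | ∃ i j, i < j ∧ m = single i 1 + single j 1}

/-- Enumerated through `σ → Fin (b + 1)` so that its cardinality is decidable. -/
noncomputable def boundedExponents [Fintype σ] [DecidableEq σ] (b d : ℕ) : Finset (σ →₀ ℕ) :=
  (Finset.univ.filter fun w : σ → Fin (b + 1) => ∑ i, (w i : ℕ) = d).image
    fun w => equivFunOnFinite.symm fun i => (w i : ℕ)

variable {σ} [Fintype σ] [DecidableEq σ]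

theorem mem_boundedExponents {b d : ℕ} {m : σ →₀ ℕ} :
    m ∈ boundedExponents σ b d ↔ (∀ i, m i ≤ b) ∧ m.degree = d := by
  simp only [boundedExponents, Finset.mem_image, Finset.mem_filter, Finset.mem_univ, true_and,
    degree_eq_sum]
  constructor
  · rintro ⟨w, hw, rfl⟩
    exact ⟨fun i => Nat.lt_succ_iff.1 (w i).isLt, by simpa using hw⟩
  · rintro ⟨hb, hd⟩
    exact ⟨fun i => ⟨m i, Nat.lt_succ_of_le (hb i)⟩, hd, by ext; simp⟩

theorem card_boundedExponents (b d : ℕ) :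
    (boundedExponents σ b d).card =
      (Finset.univ.filter fun w : σ → Fin (b + 1) => ∑ i, (w i : ℕ) = d).card := by
  refine Finset.card_image_of_injective _ fun w w' h => funext fun i => Fin.ext ?_
  simpa using DFunLike.congr_fun h i

end Exponents

theorem single_add_single_apply_le_one {σ : Type*} {i j : σ} (hij : i ≠ j) (v : σ) :
    (single i 1 + single j 1 : σ →₀ ℕ) v ≤ 1 := by
  by_cases hi : i = v <;> by_cases hj : j = v <;> simp_all

theorem pairExponents_add_subset {σ : Type*} [LinearOrder σ] [Fintype σ] :
    pairExponents σ + pairExponents σ ⊆ boundedExponents σ 2 4 := by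
  rintro _ ⟨_, ⟨i, j, hij, rfl⟩, _, ⟨k, l, hkl, rfl⟩, rfl⟩
  refine mem_boundedExponents.2 ⟨fun v => ?_, by simp⟩
  have := single_add_single_apply_le_one hij.ne v
  have := single_add_single_apply_le_one hkl.ne v
  simp only [Finsupp.add_apply] at *
  omega

theorem boundedExponents_subset_pairExponents_add :
    ↑(boundedExponents (Fin 4) 2 4) ⊆ pairExponents (Fin 4) + pairExponents (Fin 4) := by
  have decompose : ∀ w : Fin 4 → Fin 3, ∑ i, (w i : ℕ) = 4 → ∃ i j k l : Fin 4, i < j ∧ k < l ∧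
      ∀ v, (w v : ℕ) = (if i = v then 1 else 0) + (if j = v then 1 else 0)
        + (if k = v then 1 else 0) + (if l = v then 1 else 0) := by decide
  intro m hm
  obtain ⟨w, hw, rfl⟩ := Finset.mem_image.1 hm
  obtain ⟨i, j, k, l, hij, hkl, hv⟩ := decompose w (Finset.mem_filter.1 hw).2
  refine ⟨_, ⟨i, j, hij, rfl⟩, _, ⟨k, l, hkl, rfl⟩, ?_⟩
  ext v
  simp [single_apply, hv v, add_assoc]

theorem card_boundedExponents_fin_four : (boundedExponents (Fin 4) 2 4).card = 19 := by
  rw [card_boundedExponents]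
  decide

theorem stmt_0 (K : Type*) [Field K]
    (W0 : Submodule K (MvPolynomial (Fin 4) K))
    (hW0 : W0 = Submodule.span K
      {p : MvPolynomial (Fin 4) K | ∃ i j : Fin 4, i < j ∧ p = X i * X j}) :
    Module.finrank K ↥(W0 * W0) = 19 ∧
    W0 * W0 = Submodule.span K
      {p : MvPolynomial (Fin 4) K | ∃ m : Fin 4 →₀ ℕ,
        (∀ i, m i ≤ 2) ∧ (m.sum fun _ e => e) = 4 ∧ p = monomial m 1} := by
  have hW0' : W0 = Submodule.span K ((fun m => monomial m (1 : K)) '' pairExponents (Fin 4)) := by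
    rw [hW0]
    congr 1
    ext p
    simp [pairExponents, X, monomial_mul, eq_comm]
  have hsq : W0 * W0 =
      Submodule.span K ((fun m => monomial m (1 : K)) '' boundedExponents (Fin 4) 2 4) := by
    rw [hW0', span_monomial_one_mul_span_monomial_one,
      pairExponents_add_subset.antisymm boundedExponents_subset_pairExponents_add]
  refine ⟨by rw [hsq, finrank_span_monomial_one, card_boundedExponents_fin_four], hsq.trans ?_⟩
  congr 1
  ext p
  simp [mem_boundedExponents, and_assoc, eq_comm, degree_apply, Finsupp.sum]
end

section
/- Let K = Z/2Z and S = K[x1,x2,x3,x4]. Let W be the 8-dimensional subspace of S_2 spanned by x1^2, x2^2, x3^2, x1x3, x2x4, x3x4, x2x3 + x1x4, x1x2 + x4^2. Then dim_K W^2 = 34. -/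
open MvPolynomial Finsupp

noncomputable section

abbrev R2 : Type := MvPolynomial (Fin 4) (ZMod 2)

def S4 (a b c d : ℕ) : Fin 4 →₀ ℕ := single 0 a + single 1 b + single 2 c + single 3 d

noncomputable def XM (a b c d : ℕ) : R2 := X 0 ^ a * X 1 ^ b * X 2 ^ c * X 3 ^ d

lemma hXmon (a b c d : ℕ) : XM a b c d = monomial (S4 a b c d) 1 := by
  simp [XM, S4, X_pow_eq_monomial, monomial_mul]

lemma S4_eq_iff {a b c d a' b' c' d' : ℕ} :
    S4 a b c d = S4 a' b' c' d' ↔ (a = a' ∧ b = b' ∧ c = c' ∧ d = d') := by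
  constructor
  · intro h
    have h0 := DFunLike.congr_fun h 0
    have h1 := DFunLike.congr_fun h 1
    have h2 := DFunLike.congr_fun h 2
    have h3 := DFunLike.congr_fun h 3
    simp [S4, single_apply] at h0 h1 h2 h3
    exact ⟨h0, h1, h2, h3⟩
  · rintro ⟨rfl, rfl, rfl, rfl⟩; rfl

lemma h2R : (2 : R2) = 0 := by
  simpa using CharP.cast_eq_zero R2 2

def e34 : Fin 34 → Fin 4 → ℕ := ![![0,0,0,4], ![0,0,1,3], ![0,0,2,2], ![0,0,3,1], ![0,0,4,0], ![0,1,0,3], ![0,1,1,2], ![0,1,2,1], ![0,1,3,0], ![0,2,0,2], ![0,2,1,1], ![0,2,2,0], ![0,3,0,1], ![0,3,1,0], ![0,4,0,0], ![1,0,0,3], ![1,0,1,2], ![1,0,2,1], ![1,0,3,0], ![1,1,0,2], ![1,1,1,1], ![1,1,2,0], ![1,2,1,0], ![1,3,0,0], ![2,0,0,2], ![2,0,1,1], ![2,0,2,0], ![2,1,0,1], ![2,1,1,0], ![2,2,0,0], ![3,0,0,1], ![3,0,1,0], ![3,1,0,0], ![4,0,0,0]]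

def mu34 (i : Fin 34) : Fin 4 →₀ ℕ := S4 (e34 i 0) (e34 i 1) (e34 i 2) (e34 i 3)

def e8 : Fin 8 → Fin 4 → ℕ := ![![2,0,0,0], ![0,2,0,0], ![0,0,2,0], ![1,0,1,0], ![0,1,0,1], ![0,0,1,1], ![0,1,1,0], ![1,1,0,0]]

def mu8 (i : Fin 8) : Fin 4 →₀ ℕ := S4 (e8 i 0) (e8 i 1) (e8 i 2) (e8 i 3)

noncomputable def v : Fin 34 → R2 := ![XM 0 0 0 4, XM 0 0 1 3, XM 0 0 2 2, XM 0 0 3 1, XM 0 0 4 0, XM 0 1 0 3 + XM 1 2 0 1, XM 0 1 1 2, XM 0 1 2 1, XM 0 1 3 0, XM 0 2 0 2, XM 0 2 1 1, XM 0 2 2 0, XM 0 3 0 1, XM 0 3 1 0 + XM 1 2 0 1, XM 0 4 0 0, XM 1 0 0 3, XM 1 0 1 2, XM 1 0 2 1, XM 1 0 3 0, XM 1 1 0 2, XM 1 1 1 1, XM 1 1 2 0, XM 1 2 1 0, XM 1 3 0 0, XM 2 0 0 2, XM 2 0 1 1, XM 2 0 2 0, XM 2 1 0 1, XM 2 1 1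 0, XM 2 2 0 0, XM 3 0 0 1, XM 3 0 1 0, XM 3 1 0 0, XM 4 0 0 0]

noncomputable def gv : Fin 8 → R2 := ![(X 0 ^ 2 : R2), (X 1 ^ 2 : R2), (X 2 ^ 2 : R2), (X 0 * X 2 : R2), (X 1 * X 3 : R2), (X 2 * X 3 : R2), (X 1 * X 2 + X 0 * X 3 : R2), (X 0 * X 1 + X 3 ^ 2 : R2)]

lemma gveq0 : gv 0 = (X 0 ^ 2 : R2) := rfl

lemma gveq1 : gv 1 = (X 1 ^ 2 : R2) := rfl

lemma gveq2 : gv 2 = (X 2 ^ 2 : R2) := rfl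

lemma gveq3 : gv 3 = (X 0 * X 2 : R2) := rfl

lemma gveq4 : gv 4 = (X 1 * X 3 : R2) := rfl

lemma gveq5 : gv 5 = (X 2 * X 3 : R2) := rfl

lemma gveq6 : gv 6 = (X 1 * X 2 + X 0 * X 3 : R2) := rfl

lemma gveq7 : gv 7 = (X 0 * X 1 + X 3 ^ 2 : R2) := rfl

lemma veq0 : v 0 = XM 0 0 0 4 := rfl

lemma veq1 : v 1 = XM 0 0 1 3 := rfl

lemma veq2 : v 2 = XM 0 0 2 2 := rfl

lemma veq3 : v 3 = XM 0 0 3 1 := rfl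

lemma veq4 : v 4 = XM 0 0 4 0 := rfl

lemma veq5 : v 5 = XM 0 1 0 3 + XM 1 2 0 1 := rfl

lemma veq6 : v 6 = XM 0 1 1 2 := rfl

lemma veq7 : v 7 = XM 0 1 2 1 := rfl

lemma veq8 : v 8 = XM 0 1 3 0 := rfl

lemma veq9 : v 9 = XM 0 2 0 2 := rfl

lemma veq10 : v 10 = XM 0 2 1 1 := rfl

lemma veq11 : v 11 = XM 0 2 2 0 := rfl

lemma veq12 : v 12 = XM 0 3 0 1 := rfl

lemma veq13 : v 13 = XM 0 3 1 0 + XM 1 2 0 1 := rfl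

lemma veq14 : v 14 = XM 0 4 0 0 := rfl

lemma veq15 : v 15 = XM 1 0 0 3 := rfl

lemma veq16 : v 16 = XM 1 0 1 2 := rfl

lemma veq17 : v 17 = XM 1 0 2 1 := rfl

lemma veq18 : v 18 = XM 1 0 3 0 := rfl

lemma veq19 : v 19 = XM 1 1 0 2 := rfl

lemma veq20 : v 20 = XM 1 1 1 1 := rfl

lemma veq21 : v 21 = XM 1 1 2 0 := rfl

lemma veq22 : v 22 = XM 1 2 1 0 := rfl

lemma veq23 : v 23 = XM 1 3 0 0 := rfl

lemma veq24 : v 24 = XM 2 0 0 2 := rfl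

lemma veq25 : v 25 = XM 2 0 1 1 := rfl

lemma veq26 : v 26 = XM 2 0 2 0 := rfl

lemma veq27 : v 27 = XM 2 1 0 1 := rfl

lemma veq28 : v 28 = XM 2 1 1 0 := rfl

lemma veq29 : v 29 = XM 2 2 0 0 := rfl

lemma veq30 : v 30 = XM 3 0 0 1 := rfl

lemma veq31 : v 31 = XM 3 0 1 0 := rfl

lemma veq32 : v 32 = XM 3 1 0 0 := rfl

lemma veq33 : v 33 = XM 4 0 0 0 := rfl

noncomputable def phi34 : R2 →ₗ[ZMod 2] (Fin 34 → ZMod 2) := LinearMap.pi fun i => lcoeff (ZMod 2) (mu34 i)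
noncomputable def phi8 : R2 →ₗ[ZMod 2] (Fin 8 → ZMod 2) := LinearMap.pi fun i => lcoeff (ZMod 2) (mu8 i)
noncomputable def WS : Submodule (ZMod 2) R2 := Submodule.span (ZMod 2) (Set.range gv)
noncomputable def VV : Submodule (ZMod 2) R2 := Submodule.span (ZMod 2) (Set.range v)

lemma hphig0 : phi8 (gv 0) = (Pi.single (0 : Fin 8) 1 : Fin 8 → ZMod 2) := by
  refine funext fun i => ?_
  rw [show gv 0 = XM 2 0 0 0 from by rw [gveq0]; simp only [XM]; ring]
  rw [hXmon]
  simp only [phi8, LinearMap.pi_apply, lcoeff_apply, mu8, coeff_add, coeff_monomial, S4_eq_iff, Pi.single_apply]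
  revert i
  decide

lemma hphig1 : phi8 (gv 1) = (Pi.single (1 : Fin 8) 1 : Fin 8 → ZMod 2) := by
  refine funext fun i => ?_
  rw [show gv 1 = XM 0 2 0 0 from by rw [gveq1]; simp only [XM]; ring]
  rw [hXmon]
  simp only [phi8, LinearMap.pi_apply, lcoeff_apply, mu8, coeff_add, coeff_monomial, S4_eq_iff, Pi.single_apply]
  revert i
  decide

lemma hphig2 : phi8 (gv 2) = (Pi.single (2 : Fin 8) 1 : Fin 8 → ZMod 2) := by
  refine funext fun i => ?_
  rw [show gv 2 = XM 0 0 2 0 from by rw [gveq2]; simp only [XM]; ring]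
  rw [hXmon]
  simp only [phi8, LinearMap.pi_apply, lcoeff_apply, mu8, coeff_add, coeff_monomial, S4_eq_iff, Pi.single_apply]
  revert i
  decide

lemma hphig3 : phi8 (gv 3) = (Pi.single (3 : Fin 8) 1 : Fin 8 → ZMod 2) := by
  refine funext fun i => ?_
  rw [show gv 3 = XM 1 0 1 0 from by rw [gveq3]; simp only [XM]; ring]
  rw [hXmon]
  simp only [phi8, LinearMap.pi_apply, lcoeff_apply, mu8, coeff_add, coeff_monomial, S4_eq_iff, Pi.single_apply]
  revert i
  decide

lemma hphig4 : phi8 (gv 4) = (Pi.single (4 : Fin 8) 1 : Fin 8 → ZMod 2) := by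
  refine funext fun i => ?_
  rw [show gv 4 = XM 0 1 0 1 from by rw [gveq4]; simp only [XM]; ring]
  rw [hXmon]
  simp only [phi8, LinearMap.pi_apply, lcoeff_apply, mu8, coeff_add, coeff_monomial, S4_eq_iff, Pi.single_apply]
  revert i
  decide

lemma hphig5 : phi8 (gv 5) = (Pi.single (5 : Fin 8) 1 : Fin 8 → ZMod 2) := by
  refine funext fun i => ?_
  rw [show gv 5 = XM 0 0 1 1 from by rw [gveq5]; simp only [XM]; ring]
  rw [hXmon]
  simp only [phi8, LinearMap.pi_apply, lcoeff_apply, mu8, coeff_add, coeff_monomial, S4_eq_iff, Pi.single_apply]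
  revert i
  decide

lemma hphig6 : phi8 (gv 6) = (Pi.single (6 : Fin 8) 1 : Fin 8 → ZMod 2) := by
  refine funext fun i => ?_
  rw [show gv 6 = XM 0 1 1 0 + XM 1 0 0 1 from by rw [gveq6]; simp only [XM]; ring]
  rw [hXmon]
  rw [hXmon]
  simp only [phi8, LinearMap.pi_apply, lcoeff_apply, mu8, coeff_add, coeff_monomial, S4_eq_iff, Pi.single_apply]
  revert i
  decide

lemma hphig7 : phi8 (gv 7) = (Pi.single (7 : Fin 8) 1 : Fin 8 → ZMod 2) := by
  refine funext fun i => ?_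
  rw [show gv 7 = XM 0 0 0 2 + XM 1 1 0 0 from by rw [gveq7]; simp only [XM]; ring]
  rw [hXmon]
  rw [hXmon]
  simp only [phi8, LinearMap.pi_apply, lcoeff_apply, mu8, coeff_add, coeff_monomial, S4_eq_iff, Pi.single_apply]
  revert i
  decide

lemma hphiv0 : phi34 (v 0) = (Pi.single (0 : Fin 34) 1 : Fin 34 → ZMod 2) := by
  refine funext fun i => ?_
  rw [show v 0 = XM 0 0 0 4 from rfl]
  rw [hXmon]
  simp only [phi34, LinearMap.pi_apply, lcoeff_apply, mu34, coeff_add, coeff_monomial, S4_eq_iff, Pi.single_apply]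
  revert i
  decide

lemma hphiv1 : phi34 (v 1) = (Pi.single (1 : Fin 34) 1 : Fin 34 → ZMod 2) := by
  refine funext fun i => ?_
  rw [show v 1 = XM 0 0 1 3 from rfl]
  rw [hXmon]
  simp only [phi34, LinearMap.pi_apply, lcoeff_apply, mu34, coeff_add, coeff_monomial, S4_eq_iff, Pi.single_apply]
  revert i
  decide

lemma hphiv2 : phi34 (v 2) = (Pi.single (2 : Fin 34) 1 : Fin 34 → ZMod 2) := by
  refine funext fun i => ?_
  rw [show v 2 = XM 0 0 2 2 from rfl]
  rw [hXmon]
  simp only [phi34, LinearMap.pi_apply, lcoeff_apply, mu34, coeff_add, coeff_monomial, S4_eq_iff, Pi.single_apply]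
  revert i
  decide

lemma hphiv3 : phi34 (v 3) = (Pi.single (3 : Fin 34) 1 : Fin 34 → ZMod 2) := by
  refine funext fun i => ?_
  rw [show v 3 = XM 0 0 3 1 from rfl]
  rw [hXmon]
  simp only [phi34, LinearMap.pi_apply, lcoeff_apply, mu34, coeff_add, coeff_monomial, S4_eq_iff, Pi.single_apply]
  revert i
  decide

lemma hphiv4 : phi34 (v 4) = (Pi.single (4 : Fin 34) 1 : Fin 34 → ZMod 2) := by
  refine funext fun i => ?_
  rw [show v 4 = XM 0 0 4 0 from rfl]
  rw [hXmon]
  simp only [phi34, LinearMap.pi_apply, lcoeff_apply, mu34, coeff_add, coeff_monomial, S4_eq_iff, Pi.single_apply]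
  revert i
  decide

lemma hphiv5 : phi34 (v 5) = (Pi.single (5 : Fin 34) 1 : Fin 34 → ZMod 2) := by
  refine funext fun i => ?_
  rw [show v 5 = XM 0 1 0 3 + XM 1 2 0 1 from rfl]
  rw [hXmon]
  rw [hXmon]
  simp only [phi34, LinearMap.pi_apply, lcoeff_apply, mu34, coeff_add, coeff_monomial, S4_eq_iff, Pi.single_apply]
  revert i
  decide

lemma hphiv6 : phi34 (v 6) = (Pi.single (6 : Fin 34) 1 : Fin 34 → ZMod 2) := by
  refine funext fun i => ?_
  rw [show v 6 = XM 0 1 1 2 from rfl]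
  rw [hXmon]
  simp only [phi34, LinearMap.pi_apply, lcoeff_apply, mu34, coeff_add, coeff_monomial, S4_eq_iff, Pi.single_apply]
  revert i
  decide

lemma hphiv7 : phi34 (v 7) = (Pi.single (7 : Fin 34) 1 : Fin 34 → ZMod 2) := by
  refine funext fun i => ?_
  rw [show v 7 = XM 0 1 2 1 from rfl]
  rw [hXmon]
  simp only [phi34, LinearMap.pi_apply, lcoeff_apply, mu34, coeff_add, coeff_monomial, S4_eq_iff, Pi.single_apply]
  revert i
  decide

lemma hphiv8 : phi34 (v 8) = (Pi.single (8 : Fin 34) 1 : Fin 34 → ZMod 2) := by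
  refine funext fun i => ?_
  rw [show v 8 = XM 0 1 3 0 from rfl]
  rw [hXmon]
  simp only [phi34, LinearMap.pi_apply, lcoeff_apply, mu34, coeff_add, coeff_monomial, S4_eq_iff, Pi.single_apply]
  revert i
  decide

lemma hphiv9 : phi34 (v 9) = (Pi.single (9 : Fin 34) 1 : Fin 34 → ZMod 2) := by
  refine funext fun i => ?_
  rw [show v 9 = XM 0 2 0 2 from rfl]
  rw [hXmon]
  simp only [phi34, LinearMap.pi_apply, lcoeff_apply, mu34, coeff_add, coeff_monomial, S4_eq_iff, Pi.single_apply]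
  revert i
  decide

lemma hphiv10 : phi34 (v 10) = (Pi.single (10 : Fin 34) 1 : Fin 34 → ZMod 2) := by
  refine funext fun i => ?_
  rw [show v 10 = XM 0 2 1 1 from rfl]
  rw [hXmon]
  simp only [phi34, LinearMap.pi_apply, lcoeff_apply, mu34, coeff_add, coeff_monomial, S4_eq_iff, Pi.single_apply]
  revert i
  decide

lemma hphiv11 : phi34 (v 11) = (Pi.single (11 : Fin 34) 1 : Fin 34 → ZMod 2) := by
  refine funext fun i => ?_
  rw [show v 11 = XM 0 2 2 0 from rfl]
  rw [hXmon]
  simp only [phi34, LinearMap.pi_apply, lcoeff_apply, mu34, coeff_add, coeff_monomial, S4_eq_iff, Pi.single_apply]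
  revert i
  decide

lemma hphiv12 : phi34 (v 12) = (Pi.single (12 : Fin 34) 1 : Fin 34 → ZMod 2) := by
  refine funext fun i => ?_
  rw [show v 12 = XM 0 3 0 1 from rfl]
  rw [hXmon]
  simp only [phi34, LinearMap.pi_apply, lcoeff_apply, mu34, coeff_add, coeff_monomial, S4_eq_iff, Pi.single_apply]
  revert i
  decide

lemma hphiv13 : phi34 (v 13) = (Pi.single (13 : Fin 34) 1 : Fin 34 → ZMod 2) := by
  refine funext fun i => ?_
  rw [show v 13 = XM 0 3 1 0 + XM 1 2 0 1 from rfl]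
  rw [hXmon]
  rw [hXmon]
  simp only [phi34, LinearMap.pi_apply, lcoeff_apply, mu34, coeff_add, coeff_monomial, S4_eq_iff, Pi.single_apply]
  revert i
  decide

lemma hphiv14 : phi34 (v 14) = (Pi.single (14 : Fin 34) 1 : Fin 34 → ZMod 2) := by
  refine funext fun i => ?_
  rw [show v 14 = XM 0 4 0 0 from rfl]
  rw [hXmon]
  simp only [phi34, LinearMap.pi_apply, lcoeff_apply, mu34, coeff_add, coeff_monomial, S4_eq_iff, Pi.single_apply]
  revert i
  decide

lemma hphiv15 : phi34 (v 15) = (Pi.single (15 : Fin 34) 1 : Fin 34 → ZMod 2) := by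
  refine funext fun i => ?_
  rw [show v 15 = XM 1 0 0 3 from rfl]
  rw [hXmon]
  simp only [phi34, LinearMap.pi_apply, lcoeff_apply, mu34, coeff_add, coeff_monomial, S4_eq_iff, Pi.single_apply]
  revert i
  decide

lemma hphiv16 : phi34 (v 16) = (Pi.single (16 : Fin 34) 1 : Fin 34 → ZMod 2) := by
  refine funext fun i => ?_
  rw [show v 16 = XM 1 0 1 2 from rfl]
  rw [hXmon]
  simp only [phi34, LinearMap.pi_apply, lcoeff_apply, mu34, coeff_add, coeff_monomial, S4_eq_iff, Pi.single_apply]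
  revert i
  decide

lemma hphiv17 : phi34 (v 17) = (Pi.single (17 : Fin 34) 1 : Fin 34 → ZMod 2) := by
  refine funext fun i => ?_
  rw [show v 17 = XM 1 0 2 1 from rfl]
  rw [hXmon]
  simp only [phi34, LinearMap.pi_apply, lcoeff_apply, mu34, coeff_add, coeff_monomial, S4_eq_iff, Pi.single_apply]
  revert i
  decide

lemma hphiv18 : phi34 (v 18) = (Pi.single (18 : Fin 34) 1 : Fin 34 → ZMod 2) := by
  refine funext fun i => ?_
  rw [show v 18 = XM 1 0 3 0 from rfl]
  rw [hXmon]
  simp only [phi34, LinearMap.pi_apply, lcoeff_apply, mu34, coeff_add, coeff_monomial, S4_eq_iff, Pi.single_apply]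
  revert i
  decide

lemma hphiv19 : phi34 (v 19) = (Pi.single (19 : Fin 34) 1 : Fin 34 → ZMod 2) := by
  refine funext fun i => ?_
  rw [show v 19 = XM 1 1 0 2 from rfl]
  rw [hXmon]
  simp only [phi34, LinearMap.pi_apply, lcoeff_apply, mu34, coeff_add, coeff_monomial, S4_eq_iff, Pi.single_apply]
  revert i
  decide

lemma hphiv20 : phi34 (v 20) = (Pi.single (20 : Fin 34) 1 : Fin 34 → ZMod 2) := by
  refine funext fun i => ?_
  rw [show v 20 = XM 1 1 1 1 from rfl]
  rw [hXmon]
  simp only [phi34, LinearMap.pi_apply, lcoeff_apply, mu34, coeff_add, coeff_monomial, S4_eq_iff, Pi.single_apply]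
  revert i
  decide

lemma hphiv21 : phi34 (v 21) = (Pi.single (21 : Fin 34) 1 : Fin 34 → ZMod 2) := by
  refine funext fun i => ?_
  rw [show v 21 = XM 1 1 2 0 from rfl]
  rw [hXmon]
  simp only [phi34, LinearMap.pi_apply, lcoeff_apply, mu34, coeff_add, coeff_monomial, S4_eq_iff, Pi.single_apply]
  revert i
  decide

lemma hphiv22 : phi34 (v 22) = (Pi.single (22 : Fin 34) 1 : Fin 34 → ZMod 2) := by
  refine funext fun i => ?_
  rw [show v 22 = XM 1 2 1 0 from rfl]
  rw [hXmon]
  simp only [phi34, LinearMap.pi_apply, lcoeff_apply, mu34, coeff_add, coeff_monomial, S4_eq_iff, Pi.single_apply]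
  revert i
  decide

lemma hphiv23 : phi34 (v 23) = (Pi.single (23 : Fin 34) 1 : Fin 34 → ZMod 2) := by
  refine funext fun i => ?_
  rw [show v 23 = XM 1 3 0 0 from rfl]
  rw [hXmon]
  simp only [phi34, LinearMap.pi_apply, lcoeff_apply, mu34, coeff_add, coeff_monomial, S4_eq_iff, Pi.single_apply]
  revert i
  decide

lemma hphiv24 : phi34 (v 24) = (Pi.single (24 : Fin 34) 1 : Fin 34 → ZMod 2) := by
  refine funext fun i => ?_
  rw [show v 24 = XM 2 0 0 2 from rfl]
  rw [hXmon]
  simp only [phi34, LinearMap.pi_apply, lcoeff_apply, mu34, coeff_add, coeff_monomial, S4_eq_iff, Pi.single_apply]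
  revert i
  decide

lemma hphiv25 : phi34 (v 25) = (Pi.single (25 : Fin 34) 1 : Fin 34 → ZMod 2) := by
  refine funext fun i => ?_
  rw [show v 25 = XM 2 0 1 1 from rfl]
  rw [hXmon]
  simp only [phi34, LinearMap.pi_apply, lcoeff_apply, mu34, coeff_add, coeff_monomial, S4_eq_iff, Pi.single_apply]
  revert i
  decide

lemma hphiv26 : phi34 (v 26) = (Pi.single (26 : Fin 34) 1 : Fin 34 → ZMod 2) := by
  refine funext fun i => ?_
  rw [show v 26 = XM 2 0 2 0 from rfl]
  rw [hXmon]
  simp only [phi34, LinearMap.pi_apply, lcoeff_apply, mu34, coeff_add, coeff_monomial, S4_eq_iff, Pi.single_apply]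
  revert i
  decide

lemma hphiv27 : phi34 (v 27) = (Pi.single (27 : Fin 34) 1 : Fin 34 → ZMod 2) := by
  refine funext fun i => ?_
  rw [show v 27 = XM 2 1 0 1 from rfl]
  rw [hXmon]
  simp only [phi34, LinearMap.pi_apply, lcoeff_apply, mu34, coeff_add, coeff_monomial, S4_eq_iff, Pi.single_apply]
  revert i
  decide

lemma hphiv28 : phi34 (v 28) = (Pi.single (28 : Fin 34) 1 : Fin 34 → ZMod 2) := by
  refine funext fun i => ?_
  rw [show v 28 = XM 2 1 1 0 from rfl]
  rw [hXmon]
  simp only [phi34, LinearMap.pi_apply, lcoeff_apply, mu34, coeff_add, coeff_monomial, S4_eq_iff, Pi.single_apply]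
  revert i
  decide

lemma hphiv29 : phi34 (v 29) = (Pi.single (29 : Fin 34) 1 : Fin 34 → ZMod 2) := by
  refine funext fun i => ?_
  rw [show v 29 = XM 2 2 0 0 from rfl]
  rw [hXmon]
  simp only [phi34, LinearMap.pi_apply, lcoeff_apply, mu34, coeff_add, coeff_monomial, S4_eq_iff, Pi.single_apply]
  revert i
  decide

lemma hphiv30 : phi34 (v 30) = (Pi.single (30 : Fin 34) 1 : Fin 34 → ZMod 2) := by
  refine funext fun i => ?_
  rw [show v 30 = XM 3 0 0 1 from rfl]
  rw [hXmon]
  simp only [phi34, LinearMap.pi_apply, lcoeff_apply, mu34, coeff_add, coeff_monomial, S4_eq_iff, Pi.single_apply]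
  revert i
  decide

lemma hphiv31 : phi34 (v 31) = (Pi.single (31 : Fin 34) 1 : Fin 34 → ZMod 2) := by
  refine funext fun i => ?_
  rw [show v 31 = XM 3 0 1 0 from rfl]
  rw [hXmon]
  simp only [phi34, LinearMap.pi_apply, lcoeff_apply, mu34, coeff_add, coeff_monomial, S4_eq_iff, Pi.single_apply]
  revert i
  decide

lemma hphiv32 : phi34 (v 32) = (Pi.single (32 : Fin 34) 1 : Fin 34 → ZMod 2) := by
  refine funext fun i => ?_
  rw [show v 32 = XM 3 1 0 0 from rfl]
  rw [hXmon]
  simp only [phi34, LinearMap.pi_apply, lcoeff_apply, mu34, coeff_add, coeff_monomial, S4_eq_iff, Pi.single_apply]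
  revert i
  decide

lemma hphiv33 : phi34 (v 33) = (Pi.single (33 : Fin 34) 1 : Fin 34 → ZMod 2) := by
  refine funext fun i => ?_
  rw [show v 33 = XM 4 0 0 0 from rfl]
  rw [hXmon]
  simp only [phi34, LinearMap.pi_apply, lcoeff_apply, mu34, coeff_add, coeff_monomial, S4_eq_iff, Pi.single_apply]
  revert i
  decide

lemma hb0 : v 0 = gv 0 * gv 1 + gv 7 * gv 7 := by
  simp only [gveq0, gveq1, gveq7, veq0, XM]
  linear_combination (h2R) * (0 - (X 0 ^ 1 * X 1 ^ 1 * X 2 ^ 0 * X 3 ^ 2 + X 0 ^ 2 * X 1 ^ 2 * X 2 ^ 0 * X 3 ^ 0))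

lemma hb1 : v 1 = gv 3 * gv 4 + gv 5 * gv 7 := by
  simp only [gveq3, gveq4, gveq5, gveq7, veq1, XM]
  linear_combination (h2R) * (0 - (X 0 ^ 1 * X 1 ^ 1 * X 2 ^ 1 * X 3 ^ 1))

lemma hb2 : v 2 = gv 0 * gv 5 + gv 2 * gv 7 + gv 3 * gv 6 := by
  simp only [gveq0, gveq2, gveq3, gveq5, gveq6, gveq7, veq2, XM]
  linear_combination (h2R) * (0 - (X 0 ^ 1 * X 1 ^ 1 * X 2 ^ 2 * X 3 ^ 0 + X 0 ^ 2 * X 1 ^ 0 * X 2 ^ 1 * X 3 ^ 1))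

lemma hb3 : v 3 = gv 2 * gv 5 := by
  simp only [gveq2, gveq5, veq3, XM]
  ring

lemma hb4 : v 4 = gv 2 * gv 2 := by
  simp only [gveq2, veq4, XM]
  ring

lemma hb5 : v 5 = gv 4 * gv 7 := by
  simp only [gveq4, gveq7, veq5, XM]
  ring

lemma hb6 : v 6 = gv 4 * gv 5 := by
  simp only [gveq4, gveq5, veq6, XM]
  ring

lemma hb7 : v 7 = gv 2 * gv 4 := by
  simp only [gveq2, gveq4, veq7, XM]
  ring

lemma hb8 : v 8 = gv 2 * gv 6 + gv 3 * gv 5 := by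
  simp only [gveq2, gveq3, gveq5, gveq6, veq8, XM]
  linear_combination (h2R) * (0 - (X 0 ^ 1 * X 1 ^ 0 * X 2 ^ 2 * X 3 ^ 1))

lemma hb9 : v 9 = gv 4 * gv 4 := by
  simp only [gveq4, veq9, XM]
  ring

lemma hb10 : v 10 = gv 1 * gv 5 := by
  simp only [gveq1, gveq5, veq10, XM]
  ring

lemma hb11 : v 11 = gv 1 * gv 2 := by
  simp only [gveq1, gveq2, veq11, XM]
  ring

lemma hb12 : v 12 = gv 1 * gv 4 := by
  simp only [gveq1, gveq4, veq12, XM]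
  ring

lemma hb13 : v 13 = gv 1 * gv 6 := by
  simp only [gveq1, gveq6, veq13, XM]
  ring

lemma hb14 : v 14 = gv 1 * gv 1 := by
  simp only [gveq1, veq14, XM]
  ring

lemma hb15 : v 15 = gv 0 * gv 4 + gv 1 * gv 3 + gv 4 * gv 5 + gv 6 * gv 7 := by
  simp only [gveq0, gveq1, gveq3, gveq4, gveq5, gveq6, gveq7, veq15, XM]
  linear_combination (h2R) * (0 - (X 0 ^ 0 * X 1 ^ 1 * X 2 ^ 1 * X 3 ^ 2 + X 0 ^ 1 * X 1 ^ 2 * X 2 ^ 1 * X 3 ^ 0 + X 0 ^ 2 * X 1 ^ 1 * X 2 ^ 0 * X 3 ^ 1))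

lemma hb16 : v 16 = gv 2 * gv 4 + gv 5 * gv 6 := by
  simp only [gveq2, gveq4, gveq5, gveq6, veq16, XM]
  linear_combination (h2R) * (0 - (X 0 ^ 0 * X 1 ^ 1 * X 2 ^ 2 * X 3 ^ 1))

lemma hb17 : v 17 = gv 3 * gv 5 := by
  simp only [gveq3, gveq5, veq17, XM]
  ring

lemma hb18 : v 18 = gv 2 * gv 3 := by
  simp only [gveq2, gveq3, veq18, XM]
  ring

lemma hb19 : v 19 = gv 1 * gv 5 + gv 4 * gv 6 := by
  simp only [gveq1, gveq4, gveq5, gveq6, veq19, XM]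
  linear_combination (h2R) * (0 - (X 0 ^ 0 * X 1 ^ 2 * X 2 ^ 1 * X 3 ^ 1))

lemma hb20 : v 20 = gv 3 * gv 4 := by
  simp only [gveq3, gveq4, veq20, XM]
  ring

lemma hb21 : v 21 = gv 0 * gv 5 + gv 3 * gv 6 := by
  simp only [gveq0, gveq3, gveq5, gveq6, veq21, XM]
  linear_combination (h2R) * (0 - (X 0 ^ 2 * X 1 ^ 0 * X 2 ^ 1 * X 3 ^ 1))

lemma hb22 : v 22 = gv 1 * gv 3 := by
  simp only [gveq1, gveq3, veq22, XM]
  ring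

lemma hb23 : v 23 = gv 1 * gv 7 + gv 4 * gv 4 := by
  simp only [gveq1, gveq4, gveq7, veq23, XM]
  linear_combination (h2R) * (0 - (X 0 ^ 0 * X 1 ^ 2 * X 2 ^ 0 * X 3 ^ 2))

lemma hb24 : v 24 = gv 1 * gv 2 + gv 6 * gv 6 := by
  simp only [gveq1, gveq2, gveq6, veq24, XM]
  linear_combination (h2R) * (0 - (X 0 ^ 0 * X 1 ^ 2 * X 2 ^ 2 * X 3 ^ 0 + X 0 ^ 1 * X 1 ^ 1 * X 2 ^ 1 * X 3 ^ 1))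

lemma hb25 : v 25 = gv 0 * gv 5 := by
  simp only [gveq0, gveq5, veq25, XM]
  ring

lemma hb26 : v 26 = gv 3 * gv 3 := by
  simp only [gveq3, veq26, XM]
  ring

lemma hb27 : v 27 = gv 0 * gv 4 := by
  simp only [gveq0, gveq4, veq27, XM]
  ring

lemma hb28 : v 28 = gv 2 * gv 4 + gv 3 * gv 7 + gv 5 * gv 6 := by
  simp only [gveq2, gveq3, gveq4, gveq5, gveq6, gveq7, veq28, XM]
  linear_combination (h2R) * (0 - (X 0 ^ 0 * X 1 ^ 1 * X 2 ^ 2 * X 3 ^ 1 + X 0 ^ 1 * X 1 ^ 0 * X 2 ^ 1 * X 3 ^ 2))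

lemma hb29 : v 29 = gv 0 * gv 1 := by
  simp only [gveq0, gveq1, veq29, XM]
  ring

lemma hb30 : v 30 = gv 0 * gv 6 + gv 2 * gv 4 + gv 3 * gv 7 + gv 5 * gv 6 := by
  simp only [gveq0, gveq2, gveq3, gveq4, gveq5, gveq6, gveq7, veq30, XM]
  linear_combination (h2R) * (0 - (X 0 ^ 0 * X 1 ^ 1 * X 2 ^ 2 * X 3 ^ 1 + X 0 ^ 1 * X 1 ^ 0 * X 2 ^ 1 * X 3 ^ 2 + X 0 ^ 2 * X 1 ^ 1 * X 2 ^ 1 * X 3 ^ 0))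

lemma hb31 : v 31 = gv 0 * gv 3 := by
  simp only [gveq0, gveq3, veq31, XM]
  ring

lemma hb32 : v 32 = gv 0 * gv 7 + gv 1 * gv 2 + gv 6 * gv 6 := by
  simp only [gveq0, gveq1, gveq2, gveq6, gveq7, veq32, XM]
  linear_combination (h2R) * (0 - (X 0 ^ 0 * X 1 ^ 2 * X 2 ^ 2 * X 3 ^ 0 + X 0 ^ 1 * X 1 ^ 1 * X 2 ^ 1 * X 3 ^ 1 + X 0 ^ 2 * X 1 ^ 0 * X 2 ^ 0 * X 3 ^ 2))

lemma hb33 : v 33 = gv 0 * gv 0 := by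
  simp only [gveq0, veq33, XM]
  ring

lemma hp0_0 : gv 0 * gv 0 = v 33 := by
  simp only [gveq0, veq33, XM]
  ring

lemma hp0_1 : gv 0 * gv 1 = v 29 := by
  simp only [gveq0, gveq1, veq29, XM]
  ring

lemma hp0_2 : gv 0 * gv 2 = v 26 := by
  simp only [gveq0, gveq2, veq26, XM]
  ring

lemma hp0_3 : gv 0 * gv 3 = v 31 := by
  simp only [gveq0, gveq3, veq31, XM]
  ring

lemma hp0_4 : gv 0 * gv 4 = v 27 := by
  simp only [gveq0, gveq4, veq27, XM]
  ring

lemma hp0_5 : gv 0 * gv 5 = v 25 := by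
  simp only [gveq0, gveq5, veq25, XM]
  ring

lemma hp0_6 : gv 0 * gv 6 = v 28 + v 30 := by
  simp only [gveq0, gveq6, veq28, veq30, XM]
  ring

lemma hp0_7 : gv 0 * gv 7 = v 24 + v 32 := by
  simp only [gveq0, gveq7, veq24, veq32, XM]
  ring

lemma hp1_1 : gv 1 * gv 1 = v 14 := by
  simp only [gveq1, veq14, XM]
  ring

lemma hp1_2 : gv 1 * gv 2 = v 11 := by
  simp only [gveq1, gveq2, veq11, XM]
  ring

lemma hp1_3 : gv 1 * gv 3 = v 22 := by
  simp only [gveq1, gveq3, veq22, XM]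
  ring

lemma hp1_4 : gv 1 * gv 4 = v 12 := by
  simp only [gveq1, gveq4, veq12, XM]
  ring

lemma hp1_5 : gv 1 * gv 5 = v 10 := by
  simp only [gveq1, gveq5, veq10, XM]
  ring

lemma hp1_6 : gv 1 * gv 6 = v 13 := by
  simp only [gveq1, gveq6, veq13, XM]
  ring

lemma hp1_7 : gv 1 * gv 7 = v 9 + v 23 := by
  simp only [gveq1, gveq7, veq9, veq23, XM]
  ring

lemma hp2_2 : gv 2 * gv 2 = v 4 := by
  simp only [gveq2, veq4, XM]
  ring

lemma hp2_3 : gv 2 * gv 3 = v 18 := by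
  simp only [gveq2, gveq3, veq18, XM]
  ring

lemma hp2_4 : gv 2 * gv 4 = v 7 := by
  simp only [gveq2, gveq4, veq7, XM]
  ring

lemma hp2_5 : gv 2 * gv 5 = v 3 := by
  simp only [gveq2, gveq5, veq3, XM]
  ring

lemma hp2_6 : gv 2 * gv 6 = v 8 + v 17 := by
  simp only [gveq2, gveq6, veq8, veq17, XM]
  ring

lemma hp2_7 : gv 2 * gv 7 = v 2 + v 21 := by
  simp only [gveq2, gveq7, veq2, veq21, XM]
  ring

lemma hp3_3 : gv 3 * gv 3 = v 26 := by
  simp only [gveq3, veq26, XM]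
  ring

lemma hp3_4 : gv 3 * gv 4 = v 20 := by
  simp only [gveq3, gveq4, veq20, XM]
  ring

lemma hp3_5 : gv 3 * gv 5 = v 17 := by
  simp only [gveq3, gveq5, veq17, XM]
  ring

lemma hp3_6 : gv 3 * gv 6 = v 21 + v 25 := by
  simp only [gveq3, gveq6, veq21, veq25, XM]
  ring

lemma hp3_7 : gv 3 * gv 7 = v 16 + v 28 := by
  simp only [gveq3, gveq7, veq16, veq28, XM]
  ring

lemma hp4_4 : gv 4 * gv 4 = v 9 := by
  simp only [gveq4, veq9, XM]
  ring

lemma hp4_5 : gv 4 * gv 5 = v 6 := by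
  simp only [gveq4, gveq5, veq6, XM]
  ring

lemma hp4_6 : gv 4 * gv 6 = v 10 + v 19 := by
  simp only [gveq4, gveq6, veq10, veq19, XM]
  ring

lemma hp4_7 : gv 4 * gv 7 = v 5 := by
  simp only [gveq4, gveq7, veq5, XM]
  ring

lemma hp5_5 : gv 5 * gv 5 = v 2 := by
  simp only [gveq5, veq2, XM]
  ring

lemma hp5_6 : gv 5 * gv 6 = v 7 + v 16 := by
  simp only [gveq5, gveq6, veq7, veq16, XM]
  ring

lemma hp5_7 : gv 5 * gv 7 = v 1 + v 20 := by
  simp only [gveq5, gveq7, veq1, veq20, XM]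
  ring

lemma hp6_6 : gv 6 * gv 6 = v 11 + v 24 := by
  simp only [gveq6, veq11, veq24, XM]
  linear_combination (h2R) * (X 0 ^ 1 * X 1 ^ 1 * X 2 ^ 1 * X 3 ^ 1)

lemma hp6_7 : gv 6 * gv 7 = v 6 + v 15 + v 22 + v 27 := by
  simp only [gveq6, gveq7, veq6, veq15, veq22, veq27, XM]
  ring

lemma hp7_7 : gv 7 * gv 7 = v 0 + v 29 := by
  simp only [gveq7, veq0, veq29, XM]
  linear_combination (h2R) * (X 0 ^ 1 * X 1 ^ 1 * X 2 ^ 0 * X 3 ^ 2)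

lemma pmem0_0 : gv 0 * gv 0 ∈ VV := by
  rw [hp0_0]
  exact Submodule.subset_span ⟨33, rfl⟩

lemma pmem0_1 : gv 0 * gv 1 ∈ VV := by
  rw [hp0_1]
  exact Submodule.subset_span ⟨29, rfl⟩

lemma pmem0_2 : gv 0 * gv 2 ∈ VV := by
  rw [hp0_2]
  exact Submodule.subset_span ⟨26, rfl⟩

lemma pmem0_3 : gv 0 * gv 3 ∈ VV := by
  rw [hp0_3]
  exact Submodule.subset_span ⟨31, rfl⟩

lemma pmem0_4 : gv 0 * gv 4 ∈ VV := by
  rw [hp0_4]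
  exact Submodule.subset_span ⟨27, rfl⟩

lemma pmem0_5 : gv 0 * gv 5 ∈ VV := by
  rw [hp0_5]
  exact Submodule.subset_span ⟨25, rfl⟩

lemma pmem0_6 : gv 0 * gv 6 ∈ VV := by
  rw [hp0_6]
  exact add_mem (Submodule.subset_span ⟨28, rfl⟩) (Submodule.subset_span ⟨30, rfl⟩)

lemma pmem0_7 : gv 0 * gv 7 ∈ VV := by
  rw [hp0_7]
  exact add_mem (Submodule.subset_span ⟨24, rfl⟩) (Submodule.subset_span ⟨32, rfl⟩)

lemma pmem1_0 : gv 1 * gv 0 ∈ VV := by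
  rw [mul_comm]
  exact pmem0_1

lemma pmem1_1 : gv 1 * gv 1 ∈ VV := by
  rw [hp1_1]
  exact Submodule.subset_span ⟨14, rfl⟩

lemma pmem1_2 : gv 1 * gv 2 ∈ VV := by
  rw [hp1_2]
  exact Submodule.subset_span ⟨11, rfl⟩

lemma pmem1_3 : gv 1 * gv 3 ∈ VV := by
  rw [hp1_3]
  exact Submodule.subset_span ⟨22, rfl⟩

lemma pmem1_4 : gv 1 * gv 4 ∈ VV := by
  rw [hp1_4]
  exact Submodule.subset_span ⟨12, rfl⟩

lemma pmem1_5 : gv 1 * gv 5 ∈ VV := by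
  rw [hp1_5]
  exact Submodule.subset_span ⟨10, rfl⟩

lemma pmem1_6 : gv 1 * gv 6 ∈ VV := by
  rw [hp1_6]
  exact Submodule.subset_span ⟨13, rfl⟩

lemma pmem1_7 : gv 1 * gv 7 ∈ VV := by
  rw [hp1_7]
  exact add_mem (Submodule.subset_span ⟨9, rfl⟩) (Submodule.subset_span ⟨23, rfl⟩)

lemma pmem2_0 : gv 2 * gv 0 ∈ VV := by
  rw [mul_comm]
  exact pmem0_2

lemma pmem2_1 : gv 2 * gv 1 ∈ VV := by
  rw [mul_comm]
  exact pmem1_2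

lemma pmem2_2 : gv 2 * gv 2 ∈ VV := by
  rw [hp2_2]
  exact Submodule.subset_span ⟨4, rfl⟩

lemma pmem2_3 : gv 2 * gv 3 ∈ VV := by
  rw [hp2_3]
  exact Submodule.subset_span ⟨18, rfl⟩

lemma pmem2_4 : gv 2 * gv 4 ∈ VV := by
  rw [hp2_4]
  exact Submodule.subset_span ⟨7, rfl⟩

lemma pmem2_5 : gv 2 * gv 5 ∈ VV := by
  rw [hp2_5]
  exact Submodule.subset_span ⟨3, rfl⟩

lemma pmem2_6 : gv 2 * gv 6 ∈ VV := by
  rw [hp2_6]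
  exact add_mem (Submodule.subset_span ⟨8, rfl⟩) (Submodule.subset_span ⟨17, rfl⟩)

lemma pmem2_7 : gv 2 * gv 7 ∈ VV := by
  rw [hp2_7]
  exact add_mem (Submodule.subset_span ⟨2, rfl⟩) (Submodule.subset_span ⟨21, rfl⟩)

lemma pmem3_0 : gv 3 * gv 0 ∈ VV := by
  rw [mul_comm]
  exact pmem0_3

lemma pmem3_1 : gv 3 * gv 1 ∈ VV := by
  rw [mul_comm]
  exact pmem1_3

lemma pmem3_2 : gv 3 * gv 2 ∈ VV := by
  rw [mul_comm]
  exact pmem2_3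

lemma pmem3_3 : gv 3 * gv 3 ∈ VV := by
  rw [hp3_3]
  exact Submodule.subset_span ⟨26, rfl⟩

lemma pmem3_4 : gv 3 * gv 4 ∈ VV := by
  rw [hp3_4]
  exact Submodule.subset_span ⟨20, rfl⟩

lemma pmem3_5 : gv 3 * gv 5 ∈ VV := by
  rw [hp3_5]
  exact Submodule.subset_span ⟨17, rfl⟩

lemma pmem3_6 : gv 3 * gv 6 ∈ VV := by
  rw [hp3_6]
  exact add_mem (Submodule.subset_span ⟨21, rfl⟩) (Submodule.subset_span ⟨25, rfl⟩)

lemma pmem3_7 : gv 3 * gv 7 ∈ VV := by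
  rw [hp3_7]
  exact add_mem (Submodule.subset_span ⟨16, rfl⟩) (Submodule.subset_span ⟨28, rfl⟩)

lemma pmem4_0 : gv 4 * gv 0 ∈ VV := by
  rw [mul_comm]
  exact pmem0_4

lemma pmem4_1 : gv 4 * gv 1 ∈ VV := by
  rw [mul_comm]
  exact pmem1_4

lemma pmem4_2 : gv 4 * gv 2 ∈ VV := by
  rw [mul_comm]
  exact pmem2_4

lemma pmem4_3 : gv 4 * gv 3 ∈ VV := by
  rw [mul_comm]
  exact pmem3_4

lemma pmem4_4 : gv 4 * gv 4 ∈ VV := by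
  rw [hp4_4]
  exact Submodule.subset_span ⟨9, rfl⟩

lemma pmem4_5 : gv 4 * gv 5 ∈ VV := by
  rw [hp4_5]
  exact Submodule.subset_span ⟨6, rfl⟩

lemma pmem4_6 : gv 4 * gv 6 ∈ VV := by
  rw [hp4_6]
  exact add_mem (Submodule.subset_span ⟨10, rfl⟩) (Submodule.subset_span ⟨19, rfl⟩)

lemma pmem4_7 : gv 4 * gv 7 ∈ VV := by
  rw [hp4_7]
  exact Submodule.subset_span ⟨5, rfl⟩

lemma pmem5_0 : gv 5 * gv 0 ∈ VV := by
  rw [mul_comm]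
  exact pmem0_5

lemma pmem5_1 : gv 5 * gv 1 ∈ VV := by
  rw [mul_comm]
  exact pmem1_5

lemma pmem5_2 : gv 5 * gv 2 ∈ VV := by
  rw [mul_comm]
  exact pmem2_5

lemma pmem5_3 : gv 5 * gv 3 ∈ VV := by
  rw [mul_comm]
  exact pmem3_5

lemma pmem5_4 : gv 5 * gv 4 ∈ VV := by
  rw [mul_comm]
  exact pmem4_5

lemma pmem5_5 : gv 5 * gv 5 ∈ VV := by
  rw [hp5_5]
  exact Submodule.subset_span ⟨2, rfl⟩

lemma pmem5_6 : gv 5 * gv 6 ∈ VV := by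
  rw [hp5_6]
  exact add_mem (Submodule.subset_span ⟨7, rfl⟩) (Submodule.subset_span ⟨16, rfl⟩)

lemma pmem5_7 : gv 5 * gv 7 ∈ VV := by
  rw [hp5_7]
  exact add_mem (Submodule.subset_span ⟨1, rfl⟩) (Submodule.subset_span ⟨20, rfl⟩)

lemma pmem6_0 : gv 6 * gv 0 ∈ VV := by
  rw [mul_comm]
  exact pmem0_6

lemma pmem6_1 : gv 6 * gv 1 ∈ VV := by
  rw [mul_comm]
  exact pmem1_6

lemma pmem6_2 : gv 6 * gv 2 ∈ VV := by
  rw [mul_comm]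
  exact pmem2_6

lemma pmem6_3 : gv 6 * gv 3 ∈ VV := by
  rw [mul_comm]
  exact pmem3_6

lemma pmem6_4 : gv 6 * gv 4 ∈ VV := by
  rw [mul_comm]
  exact pmem4_6

lemma pmem6_5 : gv 6 * gv 5 ∈ VV := by
  rw [mul_comm]
  exact pmem5_6

lemma pmem6_6 : gv 6 * gv 6 ∈ VV := by
  rw [hp6_6]
  exact add_mem (Submodule.subset_span ⟨11, rfl⟩) (Submodule.subset_span ⟨24, rfl⟩)

lemma pmem6_7 : gv 6 * gv 7 ∈ VV := by
  rw [hp6_7]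
  exact add_mem (add_mem (add_mem (Submodule.subset_span ⟨6, rfl⟩) (Submodule.subset_span ⟨15, rfl⟩)) (Submodule.subset_span ⟨22, rfl⟩)) (Submodule.subset_span ⟨27, rfl⟩)

lemma pmem7_0 : gv 7 * gv 0 ∈ VV := by
  rw [mul_comm]
  exact pmem0_7

lemma pmem7_1 : gv 7 * gv 1 ∈ VV := by
  rw [mul_comm]
  exact pmem1_7

lemma pmem7_2 : gv 7 * gv 2 ∈ VV := by
  rw [mul_comm]
  exact pmem2_7

lemma pmem7_3 : gv 7 * gv 3 ∈ VV := by
  rw [mul_comm]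
  exact pmem3_7

lemma pmem7_4 : gv 7 * gv 4 ∈ VV := by
  rw [mul_comm]
  exact pmem4_7

lemma pmem7_5 : gv 7 * gv 5 ∈ VV := by
  rw [mul_comm]
  exact pmem5_7

lemma pmem7_6 : gv 7 * gv 6 ∈ VV := by
  rw [mul_comm]
  exact pmem6_7

lemma pmem7_7 : gv 7 * gv 7 ∈ VV := by
  rw [hp7_7]
  exact add_mem (Submodule.subset_span ⟨0, rfl⟩) (Submodule.subset_span ⟨29, rfl⟩)

lemma hgmem (i : Fin 8) : gv i ∈ WS := Submodule.subset_span ⟨i, rfl⟩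

lemma vmem0 : v 0 ∈ WS * WS := by
  rw [hb0]
  exact add_mem (Submodule.mul_mem_mul (hgmem 0) (hgmem 1)) (Submodule.mul_mem_mul (hgmem 7) (hgmem 7))

lemma vmem1 : v 1 ∈ WS * WS := by
  rw [hb1]
  exact add_mem (Submodule.mul_mem_mul (hgmem 3) (hgmem 4)) (Submodule.mul_mem_mul (hgmem 5) (hgmem 7))

lemma vmem2 : v 2 ∈ WS * WS := by
  rw [hb2]
  exact add_mem (add_mem (Submodule.mul_mem_mul (hgmem 0) (hgmem 5)) (Submodule.mul_mem_mul (hgmem 2) (hgmem 7))) (Submodule.mul_mem_mul (hgmem 3) (hgmem 6))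

lemma vmem3 : v 3 ∈ WS * WS := by
  rw [hb3]
  exact Submodule.mul_mem_mul (hgmem 2) (hgmem 5)

lemma vmem4 : v 4 ∈ WS * WS := by
  rw [hb4]
  exact Submodule.mul_mem_mul (hgmem 2) (hgmem 2)

lemma vmem5 : v 5 ∈ WS * WS := by
  rw [hb5]
  exact Submodule.mul_mem_mul (hgmem 4) (hgmem 7)

lemma vmem6 : v 6 ∈ WS * WS := by
  rw [hb6]
  exact Submodule.mul_mem_mul (hgmem 4) (hgmem 5)

lemma vmem7 : v 7 ∈ WS * WS := by
  rw [hb7]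
  exact Submodule.mul_mem_mul (hgmem 2) (hgmem 4)

lemma vmem8 : v 8 ∈ WS * WS := by
  rw [hb8]
  exact add_mem (Submodule.mul_mem_mul (hgmem 2) (hgmem 6)) (Submodule.mul_mem_mul (hgmem 3) (hgmem 5))

lemma vmem9 : v 9 ∈ WS * WS := by
  rw [hb9]
  exact Submodule.mul_mem_mul (hgmem 4) (hgmem 4)

lemma vmem10 : v 10 ∈ WS * WS := by
  rw [hb10]
  exact Submodule.mul_mem_mul (hgmem 1) (hgmem 5)

lemma vmem11 : v 11 ∈ WS * WS := by
  rw [hb11]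
  exact Submodule.mul_mem_mul (hgmem 1) (hgmem 2)

lemma vmem12 : v 12 ∈ WS * WS := by
  rw [hb12]
  exact Submodule.mul_mem_mul (hgmem 1) (hgmem 4)

lemma vmem13 : v 13 ∈ WS * WS := by
  rw [hb13]
  exact Submodule.mul_mem_mul (hgmem 1) (hgmem 6)

lemma vmem14 : v 14 ∈ WS * WS := by
  rw [hb14]
  exact Submodule.mul_mem_mul (hgmem 1) (hgmem 1)

lemma vmem15 : v 15 ∈ WS * WS := by
  rw [hb15]
  exact add_mem (add_mem (add_mem (Submodule.mul_mem_mul (hgmem 0) (hgmem 4)) (Submodule.mul_mem_mul (hgmem 1) (hgmem 3))) (Submodule.mul_mem_mul (hgmem 4) (hgmem 5))) (Submodule.mul_mem_mul (hgmem 6) (hgmem 7))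

lemma vmem16 : v 16 ∈ WS * WS := by
  rw [hb16]
  exact add_mem (Submodule.mul_mem_mul (hgmem 2) (hgmem 4)) (Submodule.mul_mem_mul (hgmem 5) (hgmem 6))

lemma vmem17 : v 17 ∈ WS * WS := by
  rw [hb17]
  exact Submodule.mul_mem_mul (hgmem 3) (hgmem 5)

lemma vmem18 : v 18 ∈ WS * WS := by
  rw [hb18]
  exact Submodule.mul_mem_mul (hgmem 2) (hgmem 3)

lemma vmem19 : v 19 ∈ WS * WS := by
  rw [hb19]
  exact add_mem (Submodule.mul_mem_mul (hgmem 1) (hgmem 5)) (Submodule.mul_mem_mul (hgmem 4) (hgmem 6))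

lemma vmem20 : v 20 ∈ WS * WS := by
  rw [hb20]
  exact Submodule.mul_mem_mul (hgmem 3) (hgmem 4)

lemma vmem21 : v 21 ∈ WS * WS := by
  rw [hb21]
  exact add_mem (Submodule.mul_mem_mul (hgmem 0) (hgmem 5)) (Submodule.mul_mem_mul (hgmem 3) (hgmem 6))

lemma vmem22 : v 22 ∈ WS * WS := by
  rw [hb22]
  exact Submodule.mul_mem_mul (hgmem 1) (hgmem 3)

lemma vmem23 : v 23 ∈ WS * WS := by
  rw [hb23]
  exact add_mem (Submodule.mul_mem_mul (hgmem 1) (hgmem 7)) (Submodule.mul_mem_mul (hgmem 4) (hgmem 4))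

lemma vmem24 : v 24 ∈ WS * WS := by
  rw [hb24]
  exact add_mem (Submodule.mul_mem_mul (hgmem 1) (hgmem 2)) (Submodule.mul_mem_mul (hgmem 6) (hgmem 6))

lemma vmem25 : v 25 ∈ WS * WS := by
  rw [hb25]
  exact Submodule.mul_mem_mul (hgmem 0) (hgmem 5)

lemma vmem26 : v 26 ∈ WS * WS := by
  rw [hb26]
  exact Submodule.mul_mem_mul (hgmem 3) (hgmem 3)

lemma vmem27 : v 27 ∈ WS * WS := by
  rw [hb27]
  exact Submodule.mul_mem_mul (hgmem 0) (hgmem 4)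

lemma vmem28 : v 28 ∈ WS * WS := by
  rw [hb28]
  exact add_mem (add_mem (Submodule.mul_mem_mul (hgmem 2) (hgmem 4)) (Submodule.mul_mem_mul (hgmem 3) (hgmem 7))) (Submodule.mul_mem_mul (hgmem 5) (hgmem 6))

lemma vmem29 : v 29 ∈ WS * WS := by
  rw [hb29]
  exact Submodule.mul_mem_mul (hgmem 0) (hgmem 1)

lemma vmem30 : v 30 ∈ WS * WS := by
  rw [hb30]
  exact add_mem (add_mem (add_mem (Submodule.mul_mem_mul (hgmem 0) (hgmem 6)) (Submodule.mul_mem_mul (hgmem 2) (hgmem 4))) (Submodule.mul_mem_mul (hgmem 3) (hgmem 7))) (Submodule.mul_mem_mul (hgmem 5) (hgmem 6))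

lemma vmem31 : v 31 ∈ WS * WS := by
  rw [hb31]
  exact Submodule.mul_mem_mul (hgmem 0) (hgmem 3)

lemma vmem32 : v 32 ∈ WS * WS := by
  rw [hb32]
  exact add_mem (add_mem (Submodule.mul_mem_mul (hgmem 0) (hgmem 7)) (Submodule.mul_mem_mul (hgmem 1) (hgmem 2))) (Submodule.mul_mem_mul (hgmem 6) (hgmem 6))

lemma vmem33 : v 33 ∈ WS * WS := by
  rw [hb33]
  exact Submodule.mul_mem_mul (hgmem 0) (hgmem 0)


lemma hrange : Set.range gv = ({ X 0 ^ 2, X 1 ^ 2, X 2 ^ 2, X 0 * X 2, X 1 * X 3, X 2 * X 3,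
    X 1 * X 2 + X 0 * X 3, X 0 * X 1 + X 3 ^ 2 } : Set R2) := by
  apply Set.eq_of_subset_of_subset
  · rintro p ⟨k, rfl⟩
    fin_cases k <;>
      simp only [Set.mem_insert_iff, Set.mem_singleton_iff]
    exacts [Or.inl rfl, Or.inr (Or.inl rfl), Or.inr (Or.inr (Or.inl rfl)),
      Or.inr (Or.inr (Or.inr (Or.inl rfl))),
      Or.inr (Or.inr (Or.inr (Or.inr (Or.inl rfl)))),
      Or.inr (Or.inr (Or.inr (Or.inr (Or.inr (Or.inl rfl))))),
      Or.inr (Or.inr (Or.inr (Or.inr (Or.inr (Or.inr (Or.inl rfl)))))),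
      Or.inr (Or.inr (Or.inr (Or.inr (Or.inr (Or.inr (Or.inr rfl))))))]
  · intro p hp
    simp only [Set.mem_insert_iff, Set.mem_singleton_iff] at hp
    rcases hp with rfl|rfl|rfl|rfl|rfl|rfl|rfl|rfl
    exacts [⟨0, rfl⟩, ⟨1, rfl⟩, ⟨2, rfl⟩, ⟨3, rfl⟩, ⟨4, rfl⟩, ⟨5, rfl⟩, ⟨6, rfl⟩, ⟨7, rfl⟩]

lemma single_li (n : ℕ) : LinearIndependent (ZMod 2) (fun k : Fin n => (Pi.single k 1 : Fin n → ZMod 2)) := by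
  have h := (Pi.basisFun (ZMod 2) (Fin n)).linearIndependent
  rwa [show ⇑(Pi.basisFun (ZMod 2) (Fin n)) = fun k : Fin n => (Pi.single k 1 : Fin n → ZMod 2)
    from funext fun k => Pi.basisFun_apply _ _ k] at h

lemma gv_li : LinearIndependent (ZMod 2) gv := by
  apply LinearIndependent.of_comp phi8
  have : ⇑phi8 ∘ gv = fun k : Fin 8 => (Pi.single k 1 : Fin 8 → ZMod 2) := by
    funext k
    fin_cases k
    exacts [hphig0, hphig1, hphig2, hphig3, hphig4, hphig5, hphig6, hphig7]
  rw [this]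
  exact single_li 8

lemma v_li : LinearIndependent (ZMod 2) v := by
  apply LinearIndependent.of_comp phi34
  have : ⇑phi34 ∘ v = fun k : Fin 34 => (Pi.single k 1 : Fin 34 → ZMod 2) := by
    funext k
    fin_cases k
    exacts [hphiv0, hphiv1, hphiv2, hphiv3, hphiv4, hphiv5, hphiv6, hphiv7, hphiv8, hphiv9, hphiv10, hphiv11, hphiv12, hphiv13, hphiv14, hphiv15, hphiv16, hphiv17, hphiv18, hphiv19, hphiv20, hphiv21, hphiv22, hphiv23, hphiv24, hphiv25, hphiv26, hphiv27, hphiv28, hphiv29, hphiv30, hphiv31, hphiv32, hphiv33]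
  rw [this]
  exact single_li 34

lemma WW_eq : WS * WS = VV := by
  apply le_antisymm
  · refine Submodule.mul_le.mpr fun x hx y hy => ?_
    refine Submodule.span_induction₂ (p := fun x y _ _ => x * y ∈ VV) ?_ ?_ ?_ ?_ ?_ ?_ ?_ hx hy
    · rintro x y ⟨i, rfl⟩ ⟨j, rfl⟩
      fin_cases i <;> fin_cases j
      exacts [pmem0_0, pmem0_1, pmem0_2, pmem0_3, pmem0_4, pmem0_5, pmem0_6, pmem0_7, pmem1_0, pmem1_1, pmem1_2, pmem1_3, pmem1_4, pmem1_5, pmem1_6, pmem1_7, pmem2_0, pmem2_1, pmem2_2, pmem2_3, pmem2_4, pmem2_5, pmem2_6, pmem2_7, pmem3_0, pmem3_1, pmem3_2, pmem3_3, pmem3_4, pmem3_5, pmem3_6, pmem3_7, pmem4_0, pmem4_1, pmem4_2, pmem4_3, pmem4_4, pmem4_5, pmem4_6, pmem4_7, pmem5_0, pmem5_1, pmem5_2, pmem5_3, pmem5_4, pmem5_5, pmem5_6, pmem5_7, pmem6_0, pmem6_1, pmem6_2, pmem6_3, pmem6_4, pmem6_5, pmem6_6, pmem6_7, pmem7_0,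 pmem7_1, pmem7_2, pmem7_3, pmem7_4, pmem7_5, pmem7_6, pmem7_7]
    · intro y _; simp
    · intro x _; simp
    · intro x y z _ _ _ h1 h12; simpa [add_mul] using add_mem h1 h12
    · intro x y z _ _ _ h1 h12; simpa [mul_add] using add_mem h1 h12
    · intro r x y _ _ h; simpa [smul_mul_assoc] using Submodule.smul_mem _ r h
    · intro r x y _ _ h; simpa [mul_smul_comm] using Submodule.smul_mem _ r h
  · rw [VV]
    refine Submodule.span_le.mpr ?_
    rintro p ⟨k, rfl⟩
    fin_cases k
    exacts [vmem0, vmem1, vmem2, vmem3, vmem4, vmem5, vmem6, vmem7, vmem8, vmem9, vmem10, vmem11, vmem12, vmem13, vmem14, vmem15, vmem16, vmem17, vmem18, vmem19, vmem20, vmem21, vmem22, vmem23, vmem24, vmem25, vmem26, vmem27, vmem28, vmem29, vmem30, vmem31, vmem32, vmem33]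

end

theorem stmt_2
    (W : Submodule (ZMod 2) (MvPolynomial (Fin 4) (ZMod 2)))
    (hW : W = Submodule.span (ZMod 2)
      { X 0 ^ 2, X 1 ^ 2, X 2 ^ 2, X 0 * X 2, X 1 * X 3, X 2 * X 3,
        X 1 * X 2 + X 0 * X 3, X 0 * X 1 + X 3 ^ 2 }) :
    Module.finrank (ZMod 2) ↥W = 8 ∧
    Module.finrank (ZMod 2) ↥(W * W) = 34 := by
  have hWr : W = WS := by rw [hW, WS, hrange]
  constructor
  · rw [hWr, WS, finrank_span_eq_card gv_li]
    simp
  · rw [hWr, WW_eq, VV, finrank_span_eq_card v_li]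
    simp
end

section
/- Let K be a field and S = K[x,y,z]. Let W2 be the 12-dimensional subspace of S_5 spanned by the strongly stable set generated by xy^2z^2, namely the monomials x^5, x^4y, x^4z, x^3y^2, x^3yz, x^3z^2, x^2y^3, x^2y^2z, x^2yz^2, xy^4, xy^3z, xy^2z^2. Then for every j ≥ 1, dim_K W2^j = 6j^2 + 5j + 1. -/
/-!
The set of exponents of the generators, `{(a, b, c) | a + b + c = 5, 1 ≤ a, c ≤ 2}`, has `j`-fold
sumset `{(a, b, c) | a + b + c = 5j, j ≤ a, c ≤ 2j}`: a triple of the latter splits off a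
generator by giving it as much `z`, then as much `y`, as the bounds allow. Hence `W2^j` is spanned
by the corresponding monomials, which are linearly independent, so its dimension is the number of
pairs `(c, a)` with `c ≤ 2j`, `j ≤ a ≤ 5j - c`, namely `∑_{c ≤ 2j} (4j + 1 - c) = 6j² + 5j + 1`.
-/

open MvPolynomial Finset Pointwise

def w2Exponents (j : ℕ) : Finset (ℕ × ℕ × ℕ) :=
  ((range (2 * j + 1)).sigma fun c => Icc j (5 * j - c)).image
    fun p => (p.2, 5 * j - p.2 - p.1, p.1)

lemma mem_w2Exponents {j a b c : ℕ} :
    (a, b, c) ∈ w2Exponents j ↔ a + b + c = 5 * j ∧ j ≤ a ∧ c ≤ 2 * j := by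
  simp only [w2Exponents, mem_image, mem_sigma, mem_range, mem_Icc, Prod.mk.injEq]
  constructor
  · rintro ⟨⟨c', a'⟩, ⟨hc, ha, ha'⟩, rfl, rfl, rfl⟩
    omega
  · rintro ⟨habc, ha, hc⟩
    refine ⟨⟨c, a⟩, ⟨?_, ha, ?_⟩, rfl, ?_, rfl⟩ <;> dsimp only <;> omega

lemma w2Exponents_zero : w2Exponents 0 = {0} := by decide

lemma w2Exponents_one : w2Exponents 1 = {(5, 0, 0), (4, 1, 0), (4, 0, 1), (3, 2, 0), (3, 1, 1),
    (3, 0, 2), (2, 3, 0), (2, 2, 1), (2, 1, 2), (1, 4, 0), (1, 3, 1), (1, 2, 2)} := by decide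

lemma w2Exponents_add (i j : ℕ) :
    (w2Exponents i : Set (ℕ × ℕ × ℕ)) + w2Exponents j = w2Exponents (i + j) := by
  ext ⟨a, b, c⟩
  simp only [Set.mem_add, Finset.mem_coe, Prod.exists, mem_w2Exponents, Prod.mk_add_mk,
    Prod.mk.injEq]
  constructor
  · rintro ⟨a₁, b₁, c₁, h₁, a₂, b₂, c₂, h₂, rfl, rfl, rfl⟩
    omega
  · rintro ⟨habc, ha, hc⟩
    refine ⟨5 * i - min c (2 * i) - min b (4 * i - min c (2 * i)), min b (4 * i - min c (2 * i)),
      min c (2 * i), ⟨by omega, by omega, by omega⟩,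
      a - (5 * i - min c (2 * i) - min b (4 * i - min c (2 * i))),
      b - min b (4 * i - min c (2 * i)), c - min c (2 * i), ⟨by omega, by omega, by omega⟩,
      by omega, by omega, by omega⟩

lemma sum_range_add_sub (n k : ℕ) :
    ∑ i ∈ range (n + 1), (k + n - i) = (n + 1) * k + ∑ i ∈ range (n + 1), i := calc
  ∑ i ∈ range (n + 1), (k + n - i) = ∑ i ∈ range (n + 1), (k + (n + 1 - 1 - i)) :=
    sum_congr rfl fun i hi => by rw [mem_range] at hi; omega
  _ = ∑ i ∈ range (n + 1), (k + i) := sum_range_reflect (k + ·) (n + 1)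
  _ = (n + 1) * k + ∑ i ∈ range (n + 1), i := by
    rw [sum_add_distrib, sum_const, card_range, smul_eq_mul]

lemma card_w2Exponents (j : ℕ) : #(w2Exponents j) = 6 * j ^ 2 + 5 * j + 1 := by
  rw [w2Exponents, card_image_of_injOn, card_sigma]
  · have hfiber : ∀ c ∈ range (2 * j + 1), #(Icc j (5 * j - c)) = (2 * j + 1) + 2 * j - c := by
      intro c hc
      rw [mem_range] at hc
      rw [Nat.card_Icc]
      omega
    have hgauss := sum_range_id_mul_two (2 * j + 1)
    rw [sum_congr rfl hfiber, sum_range_add_sub]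
    simp only [Nat.add_sub_cancel] at hgauss
    nlinarith
  · rintro ⟨c, a⟩ - ⟨c', a'⟩ - h
    simp only [Prod.mk.injEq] at h
    obtain ⟨rfl, -, rfl⟩ := h
    rfl

noncomputable def xyzExponent (e : ℕ × ℕ × ℕ) : Fin 3 →₀ ℕ :=
  Finsupp.single 0 e.1 + Finsupp.single 1 e.2.1 + Finsupp.single 2 e.2.2

lemma xyzExponent_injective : Function.Injective xyzExponent := by
  rintro ⟨a, b, c⟩ ⟨a', b', c'⟩ h
  have h0 := DFunLike.congr_fun h 0
  have h1 := DFunLike.congr_fun h 1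
  have h2 := DFunLike.congr_fun h 2
  simp only [xyzExponent, Finsupp.add_apply, Finsupp.single_apply] at h0 h1 h2
  simp_all

section Monomials

variable {R : Type*} [CommSemiring R]

noncomputable def xyzMonomial (e : ℕ × ℕ × ℕ) : MvPolynomial (Fin 3) R :=
  X 0 ^ e.1 * X 1 ^ e.2.1 * X 2 ^ e.2.2

lemma xyzMonomial_eq_monomial (e : ℕ × ℕ × ℕ) :
    (xyzMonomial e : MvPolynomial (Fin 3) R) = monomial (xyzExponent e) 1 := by
  simp [xyzMonomial, xyzExponent, X_pow_eq_monomial, monomial_mul]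

lemma xyzMonomial_add (e f : ℕ × ℕ × ℕ) :
    (xyzMonomial (e + f) : MvPolynomial (Fin 3) R) = xyzMonomial e * xyzMonomial f := by
  simp only [xyzMonomial, Prod.fst_add, Prod.snd_add, pow_add]
  ring

lemma image_xyzMonomial_add (s t : Set (ℕ × ℕ × ℕ)) :
    (xyzMonomial '' (s + t) : Set (MvPolynomial (Fin 3) R)) =
      xyzMonomial '' s * xyzMonomial '' t := by
  rw [← Set.image2_add, Set.image_image2, ← Set.image2_mul, Set.image2_image_left,
    Set.image2_image_right]
  simp_rw [xyzMonomial_add]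

lemma image_w2Exponents_one :
    (xyzMonomial '' (w2Exponents 1 : Set (ℕ × ℕ × ℕ)) : Set (MvPolynomial (Fin 3) R)) =
      { X 0 ^ 5, X 0 ^ 4 * X 1, X 0 ^ 4 * X 2, X 0 ^ 3 * X 1 ^ 2, X 0 ^ 3 * X 1 * X 2,
        X 0 ^ 3 * X 2 ^ 2, X 0 ^ 2 * X 1 ^ 3, X 0 ^ 2 * X 1 ^ 2 * X 2,
        X 0 ^ 2 * X 1 * X 2 ^ 2, X 0 * X 1 ^ 4, X 0 * X 1 ^ 3 * X 2,
        X 0 * X 1 ^ 2 * X 2 ^ 2 } := by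
  simp [w2Exponents_one, Set.image_insert_eq, xyzMonomial]

lemma image_w2Exponents_one_pow (j : ℕ) :
    (xyzMonomial '' (w2Exponents 1 : Set (ℕ × ℕ × ℕ)) : Set (MvPolynomial (Fin 3) R)) ^ j =
      xyzMonomial '' (w2Exponents j : Set (ℕ × ℕ × ℕ)) := by
  induction j with
  | zero => simp [w2Exponents_zero, xyzMonomial, Set.singleton_one]
  | succ j ih => rw [pow_succ, ih, ← image_xyzMonomial_add, w2Exponents_add]

end Monomials

lemma finrank_span_image_xyzMonomial (K : Type*) [Field K] (s : Finset (ℕ × ℕ × ℕ)) :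
    Module.finrank K (Submodule.span K (xyzMonomial (R := K) '' (s : Set (ℕ × ℕ × ℕ)))) =
      #s := by
  have hcomp : (fun e : (s : Set (ℕ × ℕ × ℕ)) => (xyzMonomial e.1 : MvPolynomial (Fin 3) K)) =
      basisMonomials (Fin 3) K ∘ xyzExponent ∘ Subtype.val := by
    funext e
    simp [xyzMonomial_eq_monomial]
  have hli : LinearIndependent K
      fun e : (s : Set (ℕ × ℕ × ℕ)) => (xyzMonomial e.1 : MvPolynomial (Fin 3) K) :=
    hcomp ▸ (basisMonomials (Fin 3) K).linearIndependent.comp _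
      (xyzExponent_injective.comp Subtype.val_injective)
  rw [Set.image_eq_range, finrank_span_eq_card hli]
  simp

theorem stmt_6 (K : Type*) [Field K]
    (W2 : Submodule K (MvPolynomial (Fin 3) K))
    (hW2 : W2 = Submodule.span K
      ({ X 0 ^ 5, X 0 ^ 4 * X 1, X 0 ^ 4 * X 2, X 0 ^ 3 * X 1 ^ 2, X 0 ^ 3 * X 1 * X 2,
         X 0 ^ 3 * X 2 ^ 2, X 0 ^ 2 * X 1 ^ 3, X 0 ^ 2 * X 1 ^ 2 * X 2,
         X 0 ^ 2 * X 1 * X 2 ^ 2, X 0 * X 1 ^ 4, X 0 * X 1 ^ 3 * X 2,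
         X 0 * X 1 ^ 2 * X 2 ^ 2 } : Set (MvPolynomial (Fin 3) K))) :
    ∀ j : ℕ, 1 ≤ j → Module.finrank K ↥(W2 ^ j) = 6 * j ^ 2 + 5 * j + 1 := by
  intro j _
  rw [hW2, ← image_w2Exponents_one, Submodule.span_pow, image_w2Exponents_one_pow,
    finrank_span_image_xyzMonomial, card_w2Exponents]
end

section
/- Let K be a field of characteristic ≠ 2 and let F = a1·x1^2 + a2·x2^2 + a3·x3^2 + a4·x4^2, G = b1·x1^2 + b2·x2^2 + b3·x3^2 + b4·x4^2 in S = K[x1,x2,x3,x4]. Let W0 = span of the squarefree monomials x_i x_j (i < j) and W = W0 + span{F, G}. If (1) all 2×2 minors of the matrix with rows (a1,a2,a3,a4) and (b1,b2,b3,b4) are nonzero, and (2) the 3×4 matrix with rows (a1^2,a2^2,a3^2,a4^2), (b1^2,b2^2,b3^2,b4^2), (a1b1,a2b2,a3b3,a4b4) has rank 3, then dim_K W = 8 and dim_K W^2 = 34. -/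
/-!
The coefficients of `x₁²` and `x₂²` separate `F` and `G` from the squarefree quadrics, so
`dim W = 6 + 2`.

In degree 4, products of squarefree quadrics give every monomial with all exponents `≤ 2` and
every `xᵢ xⱼ xₖ²` with `k ∉ {i, j}`. Modulo these, `xᵢ xⱼ (bⱼ F - aⱼ G) ≡ (aᵢ bⱼ - aⱼ bᵢ) xᵢ³ xⱼ`,
so by (1) `W²` contains all 31 degree-4 monomials other than the `xᵢ⁴`, and `W²` is their span
plus `span {F², G², FG}`. The `xᵢ⁴`-coefficients of `F², G², FG` are the rows of the matrix in
(2), hence independent, while the 31 monomials have no `xᵢ⁴`-coefficient; so `dim W² = 31 + 3`.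
-/

open MvPolynomial Submodule

namespace DiagonalQuadrics

section LinearAlgebra

variable {K V V' : Type*} [Field K] [AddCommGroup V] [Module K V] [AddCommGroup V'] [Module K V']

theorem finrank_sup_span_eq_of_le_ker {ι : Type*} [Fintype ι] {U : Submodule K V}
    [FiniteDimensional K U] {φ : V →ₗ[K] V'} (hU : U ≤ LinearMap.ker φ) {t : ι → V}
    (ht : LinearIndependent K (φ ∘ t)) :
    Module.finrank K ↥(U ⊔ span K (Set.range t)) = Module.finrank K U + Fintype.card ι := by
  have hdisj : U ⊓ span K (Set.range t) = ⊥ := by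
    rw [eq_bot_iff]
    rintro x ⟨hxU, hxt⟩
    obtain ⟨c, rfl⟩ := (mem_span_range_iff_exists_fun K).mp hxt
    have hc : ∀ i, c i = 0 := Fintype.linearIndependent_iff.mp ht c (by simpa using hU hxU)
    simp [hc]
  have : FiniteDimensional K (span K (Set.range t)) :=
    FiniteDimensional.span_of_finite K (Set.finite_range t)
  have := finrank_sup_add_finrank_inf_eq U (span K (Set.range t))
  rw [hdisj, finrank_bot, finrank_span_eq_card (ht.of_comp φ)] at this
  omega

theorem mem_of_sum_mem_of_forall_ne {ι : Type*} [Fintype ι] [DecidableEq ι] {N : Submodule K V}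
    {f : ι → V} (i : ι) (hsum : ∑ k, f k ∈ N) (hne : ∀ k ≠ i, f k ∈ N) : f i ∈ N := by
  rw [← Finset.add_sum_erase _ _ (Finset.mem_univ i)] at hsum
  exact (N.add_mem_iff_left (N.sum_mem fun k hk => hne k (Finset.ne_of_mem_erase hk))).mp hsum

theorem linearIndependent_row_of_rank_eq_card {m n : Type*} [Fintype m] [Fintype n]
    {M : Matrix m n K} (h : M.rank = Fintype.card m) : LinearIndependent K M.row := by
  rw [linearIndependent_iff_card_eq_finrank_span, Set.finrank, ← M.rank_eq_finrank_span_row, h]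

end LinearAlgebra

section Monomial

variable {K σ : Type*} [Field K] [Fintype σ]

noncomputable def expMonomial (d : σ → ℕ) : MvPolynomial σ K :=
  monomial (Finsupp.equivFunOnFinite.symm d) 1

noncomputable def expCoeff (e : σ → ℕ) : MvPolynomial σ K →ₗ[K] K :=
  lcoeff K (Finsupp.equivFunOnFinite.symm e)

theorem expMonomial_mul (d e : σ → ℕ) :
    expMonomial d * expMonomial e = (expMonomial (d + e) : MvPolynomial σ K) := by
  rw [expMonomial, expMonomial, expMonomial, monomial_mul, mul_one]
  congr
  ext
  simp

theorem expCoeff_expMonomial (d e : σ → ℕ) :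
    expCoeff e (expMonomial d : MvPolynomial σ K) = if d = e then 1 else 0 := by
  classical
  rw [expCoeff, expMonomial, lcoeff_apply, coeff_monomial]
  by_cases h : d = e <;> simp [h]

theorem finrank_span_image_expMonomial (D : Finset (σ → ℕ)) :
    Module.finrank K (span K ((expMonomial : (σ → ℕ) → MvPolynomial σ K) '' D)) = D.card := by
  classical
  have hli : LinearIndependent K (expMonomial : (σ → ℕ) → MvPolynomial σ K) :=
    (basisMonomials σ K).linearIndependent.comp _ Finsupp.equivFunOnFinite.symm.injective
  rw [← Finset.coe_image, finrank_span_finset_eq_card,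
    Finset.card_image_of_injective _ hli.injective]
  rw [Finset.coe_image]
  exact (hli.linearIndepOn (s := D)).id_image

theorem finrank_span_image_expMonomial_sup {V : Type*} [AddCommGroup V] [Module K V] {ι : Type*}
    [Fintype ι] (D : Finset (σ → ℕ)) {φ : MvPolynomial σ K →ₗ[K] V}
    (hD : ∀ d ∈ D, φ (expMonomial d) = 0) {t : ι → MvPolynomial σ K}
    (ht : LinearIndependent K (φ ∘ t)) :
    Module.finrank K ↥(span K (expMonomial '' D) ⊔ span K (Set.range t)) =
      D.card + Fintype.card ι := by
  have : FiniteDimensional K (span K ((expMonomial : (σ → ℕ) → MvPolynomial σ K) '' D)) :=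
    FiniteDimensional.span_of_finite K (D.finite_toSet.image _)
  have hker : span K (expMonomial '' D) ≤ LinearMap.ker φ :=
    span_le.mpr (by rintro _ ⟨d, hd, rfl⟩; exact hD d hd)
  rw [finrank_sup_span_eq_of_le_ker hker ht, finrank_span_image_expMonomial]

variable [DecidableEq σ]

theorem X_pow_eq_expMonomial (i : σ) (n : ℕ) :
    X i ^ n = (expMonomial (Pi.single i n) : MvPolynomial σ K) := by
  rw [X_pow_eq_monomial, expMonomial, Finsupp.equivFunOnFinite_symm_single]

theorem X_mul_X_eq_expMonomial (i j : σ) :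
    X i * X j = (expMonomial (Pi.single i 1 + Pi.single j 1) : MvPolynomial σ K) := by
  rw [← expMonomial_mul, ← X_pow_eq_expMonomial, ← X_pow_eq_expMonomial, pow_one, pow_one]

theorem X_mul_X_mul_X_pow_eq_expMonomial (i j k : σ) (n : ℕ) :
    X i * X j * X k ^ n =
      (expMonomial (Pi.single i 1 + Pi.single j 1 + Pi.single k n) : MvPolynomial σ K) := by
  rw [X_mul_X_eq_expMonomial, X_pow_eq_expMonomial, expMonomial_mul]

end Monomial

section DiagonalForm

theorem pi_single_left_inj {σ : Type*} [DecidableEq σ] {k i : σ} {m : ℕ} (hm : m ≠ 0) :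
    (Pi.single k m : σ → ℕ) = Pi.single i m ↔ k = i := by
  refine ⟨fun h => ?_, fun h => h ▸ rfl⟩
  by_contra hne
  simpa [Pi.single_apply, hne, hm] using congrFun h k

theorem pi_single_two_add_single_two_eq_single_four_iff {σ : Type*} [DecidableEq σ] {k l i : σ} :
    Pi.single k 2 + Pi.single l 2 = (Pi.single i 4 : σ → ℕ) ↔ k = i ∧ l = i := by
  refine ⟨fun h => ⟨?_, ?_⟩, fun ⟨hk, hl⟩ => by rw [hk, hl, ← Pi.single_add]⟩ <;> by_contra hne
  · simpa [Pi.single_apply, hne] using congrFun h k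
  · simpa [Pi.single_apply, hne] using congrFun h l

variable {K σ : Type*} [Field K] [Fintype σ]

noncomputable def diagForm (c : σ → K) : MvPolynomial σ K :=
  ∑ i, C (c i) * X i ^ 2

theorem X_mul_X_mul_diagForm (i j : σ) (c : σ → K) :
    X i * X j * diagForm c = ∑ k, c k • (X i * X j * X k ^ 2) := by
  rw [diagForm, Finset.mul_sum]
  refine Finset.sum_congr rfl fun k _ => ?_
  rw [smul_eq_C_mul]
  ring

variable [DecidableEq σ]

noncomputable def purePowCoeffs (n : ℕ) : MvPolynomial σ K →ₗ[K] σ → K :=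
  LinearMap.pi fun i => expCoeff (Pi.single i n)

theorem diagForm_eq_sum_expMonomial (c : σ → K) :
    diagForm c = ∑ i, c i • expMonomial (Pi.single i 2) := by
  simp [diagForm, X_pow_eq_expMonomial, smul_eq_C_mul]

theorem purePowCoeffs_diagForm (c : σ → K) : purePowCoeffs 2 (diagForm c) = c := by
  ext i
  simp [purePowCoeffs, diagForm_eq_sum_expMonomial, expCoeff_expMonomial,
    pi_single_left_inj two_ne_zero]

theorem purePowCoeffs_diagForm_mul (c d : σ → K) :
    purePowCoeffs 4 (diagForm c * diagForm d) = c * d := by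
  ext i
  simp [purePowCoeffs, diagForm_eq_sum_expMonomial, Finset.sum_mul_sum, expMonomial_mul,
    expCoeff_expMonomial, pi_single_two_add_single_two_eq_single_four_iff, ite_and, mul_comm]

end DiagonalForm

section FourVariables

def sqfreeExps : Finset (Fin 4 → ℕ) :=
  ((Finset.univ : Finset (Fin 4 × Fin 4)).filter fun p => p.1 < p.2).image
    fun p => Pi.single p.1 1 + Pi.single p.2 1

def mixedQuarticExps : Finset (Fin 4 → ℕ) :=
  (Fintype.piFinset fun _ => Finset.range 4).filter fun d => ∑ i, d i = 4

theorem card_sqfreeExps : sqfreeExps.card = 6 := by decide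

theorem card_mixedQuarticExps : mixedQuarticExps.card = 31 := by decide

theorem ne_single_two_of_mem_sqfreeExps : ∀ d ∈ sqfreeExps, ∀ i, d ≠ Pi.single i 2 := by
  decide

theorem ne_single_four_of_mem_mixedQuarticExps :
    ∀ d ∈ mixedQuarticExps, ∀ i, d ≠ Pi.single i 4 := by
  decide

theorem add_mem_mixedQuarticExps :
    ∀ e ∈ sqfreeExps, ∀ f ∈ sqfreeExps, e + f ∈ mixedQuarticExps := by
  decide

theorem single_add_single_add_single_two_mem_mixedQuarticExps :
    ∀ i j k : Fin 4, i ≠ j → Pi.single i 1 + Pi.single j 1 + Pi.single k 2 ∈ mixedQuarticExps := by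
  decide

theorem mixedQuarticExps_cases : ∀ d ∈ mixedQuarticExps,
    (∃ e ∈ sqfreeExps, ∃ f ∈ sqfreeExps, d = e + f) ∨
      ∃ i j : Fin 4, i ≠ j ∧ d = Pi.single i 1 + Pi.single j 1 + Pi.single i 2 := by
  decide

variable {K : Type*} [Field K]

noncomputable def sqfreeSpan : Submodule K (MvPolynomial (Fin 4) K) :=
  span K {p | ∃ i j : Fin 4, i < j ∧ p = X i * X j}

noncomputable def quadSpace (a b : Fin 4 → K) : Submodule K (MvPolynomial (Fin 4) K) :=
  sqfreeSpan ⊔ span K {diagForm a, diagForm b}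

noncomputable def diagFormProducts (a b : Fin 4 → K) : Fin 3 → MvPolynomial (Fin 4) K :=
  ![diagForm a * diagForm a, diagForm b * diagForm b, diagForm a * diagForm b]

noncomputable def mixedQuarticSpan : Submodule K (MvPolynomial (Fin 4) K) :=
  span K (expMonomial '' mixedQuarticExps)

theorem sqfreeSpan_eq : (sqfreeSpan : Submodule K _) = span K (expMonomial '' sqfreeExps) := by
  rw [sqfreeSpan]
  congr 1
  ext p
  simp [sqfreeExps, X_mul_X_eq_expMonomial, eq_comm]

theorem X_mul_X_mem_sqfreeSpan {i j : Fin 4} (hij : i ≠ j) :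
    (X i * X j : MvPolynomial (Fin 4) K) ∈ sqfreeSpan := by
  rcases hij.lt_or_gt with h | h
  · exact subset_span ⟨i, j, h, rfl⟩
  · exact mul_comm (X j : MvPolynomial (Fin 4) K) (X i) ▸ subset_span ⟨j, i, h, rfl⟩

theorem finrank_quadSpace {a b : Fin 4 → K} (hminor : a 0 * b 1 - a 1 * b 0 ≠ 0) :
    Module.finrank K (quadSpace a b) = 8 := by
  rw [quadSpace, sqfreeSpan_eq, ← Matrix.range_cons_cons_empty _ _ ![],
    finrank_span_image_expMonomial_sup _ (φ := purePowCoeffs 2), card_sqfreeExps]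
  · rfl
  · intro d hd
    ext i
    simp [purePowCoeffs, expCoeff_expMonomial, ne_single_two_of_mem_sqfreeExps d hd i]
  · have hcomp : purePowCoeffs 2 ∘ ![diagForm a, diagForm b] = ![a, b] := by
      ext j : 1
      fin_cases j <;> simp [purePowCoeffs_diagForm]
    rw [hcomp, LinearIndependent.pair_iff]
    intro s t hst
    have h0 := congrFun hst 0
    have h1 := congrFun hst 1
    simp only [Pi.add_apply, Pi.smul_apply, smul_eq_mul, Pi.zero_apply] at h0 h1
    constructor
    · refine (mul_eq_zero.mp ?_).resolve_right hminor
      linear_combination b 1 * h0 - b 0 * h1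
    · refine (mul_eq_zero.mp ?_).resolve_right hminor
      linear_combination a 0 * h1 - a 1 * h0

theorem diagForm_left_mem_quadSpace (a b : Fin 4 → K) : diagForm a ∈ quadSpace a b :=
  mem_sup_right (subset_span (by simp))

theorem diagForm_right_mem_quadSpace (a b : Fin 4 → K) : diagForm b ∈ quadSpace a b :=
  mem_sup_right (subset_span (by simp))

theorem X_mul_X_mul_diagForm_mem_mixedQuarticSpan {i j : Fin 4} (hij : i ≠ j) (c : Fin 4 → K) :
    X i * X j * diagForm c ∈ mixedQuarticSpan := by
  rw [X_mul_X_mul_diagForm]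
  refine sum_mem fun k _ => smul_mem _ _ ?_
  rw [X_mul_X_mul_X_pow_eq_expMonomial]
  exact subset_span ⟨_, single_add_single_add_single_two_mem_mixedQuarticExps i j k hij, rfl⟩

theorem sqfreeSpan_mul_sqfreeSpan_le :
    (sqfreeSpan * sqfreeSpan : Submodule K _) ≤ mixedQuarticSpan := by
  rw [sqfreeSpan_eq, span_mul_span, mixedQuarticSpan, span_le]
  rintro _ ⟨_, ⟨e, he, rfl⟩, _, ⟨f, hf, rfl⟩, rfl⟩
  dsimp only
  rw [expMonomial_mul]
  exact subset_span ⟨_, add_mem_mixedQuarticExps e he f hf, rfl⟩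

theorem sqfreeSpan_mul_span_diagForm_le (a b : Fin 4 → K) :
    sqfreeSpan * span K {diagForm a, diagForm b} ≤ mixedQuarticSpan := by
  rw [sqfreeSpan, span_mul_span, span_le]
  rintro _ ⟨_, ⟨i, j, hij, rfl⟩, q, hq, rfl⟩
  rcases hq with rfl | rfl <;> exact X_mul_X_mul_diagForm_mem_mixedQuarticSpan hij.ne _

theorem span_diagForm_mul_self_le (a b : Fin 4 → K) :
    span K {diagForm a, diagForm b} * span K {diagForm a, diagForm b} ≤
      span K (Set.range (diagFormProducts a b)) := by
  rw [span_mul_span, span_le]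
  rintro _ ⟨p, hp, q, hq, rfl⟩
  rcases hp with rfl | rfl <;> rcases hq with rfl | rfl
  · exact subset_span ⟨0, rfl⟩
  · exact subset_span ⟨2, rfl⟩
  · exact subset_span ⟨2, mul_comm _ _⟩
  · exact subset_span ⟨1, rfl⟩

theorem quadSpace_mul_self_le (a b : Fin 4 → K) :
    quadSpace a b * quadSpace a b ≤ mixedQuarticSpan ⊔
      span K (Set.range (diagFormProducts a b)) := by
  have hmixed := sqfreeSpan_mul_span_diagForm_le a b
  rw [quadSpace, Submodule.sup_mul, Submodule.mul_sup, Submodule.mul_sup,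
    Submodule.mul_comm (span K _) sqfreeSpan]
  exact sup_le (sup_le (le_sup_of_le_left sqfreeSpan_mul_sqfreeSpan_le) (le_sup_of_le_left hmixed))
    (sup_le (le_sup_of_le_left hmixed) (le_sup_of_le_right (span_diagForm_mul_self_le a b)))

theorem X_mul_X_mul_X_sq_mem_quadSpace_mul_self {a b : Fin 4 → K} {i j : Fin 4} (hij : i ≠ j)
    (hminor : a i * b j - a j * b i ≠ 0) :
    X i * X j * X i ^ 2 ∈ quadSpace a b * quadSpace a b := by
  set N := quadSpace a b * quadSpace a b
  have hsqfree : sqfreeSpan * sqfreeSpan ≤ N := mul_le_mul' le_sup_left le_sup_left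
  have hXX : X i * X j ∈ quadSpace a b := mem_sup_left (X_mul_X_mem_sqfreeSpan hij)
  have hsum : ∑ k, (b j * a k - a j * b k) • (X i * X j * X k ^ 2) ∈ N := by
    have : ∑ k, (b j * a k - a j * b k) • (X i * X j * X k ^ 2) =
        b j • (X i * X j * diagForm a) - a j • (X i * X j * diagForm b) := by
      simp only [X_mul_X_mul_diagForm, Finset.smul_sum, ← Finset.sum_sub_distrib, smul_smul,
        ← sub_smul]
    rw [this]
    exact sub_mem (smul_mem _ _ (mul_mem_mul hXX (diagForm_left_mem_quadSpace a b)))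
      (smul_mem _ _ (mul_mem_mul hXX (diagForm_right_mem_quadSpace a b)))
  -- the `k = j` term vanishes and the terms with `k ∉ {i, j}` lie in `W0²`
  have := mem_of_sum_mem_of_forall_ne i hsum fun k hki => ?_
  · rwa [smul_mem_iff _ (by rwa [mul_comm (b j)])] at this
  · by_cases hkj : k = j
    · simp [hkj, mul_comm]
    · rw [show X i * X j * X k ^ 2 = X i * X k * (X j * X k) by ring]
      exact smul_mem _ _ (hsqfree (mul_mem_mul (X_mul_X_mem_sqfreeSpan (Ne.symm hki))
        (X_mul_X_mem_sqfreeSpan (Ne.symm hkj))))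

theorem mixedQuarticSpan_le_quadSpace_mul_self {a b : Fin 4 → K}
    (hminors : ∀ i j : Fin 4, i < j → a i * b j - a j * b i ≠ 0) :
    mixedQuarticSpan ≤ quadSpace a b * quadSpace a b := by
  rw [mixedQuarticSpan, span_le]
  rintro _ ⟨d, hd, rfl⟩
  rcases mixedQuarticExps_cases d hd with ⟨e, he, f, hf, rfl⟩ | ⟨i, j, hij, rfl⟩
  · rw [← expMonomial_mul]
    have hsqfree : ∀ g ∈ sqfreeExps, expMonomial g ∈ quadSpace a b := fun g hg =>
      mem_sup_left (sqfreeSpan_eq (K := K) ▸ subset_span ⟨g, hg, rfl⟩)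
    exact mul_mem_mul (hsqfree e he) (hsqfree f hf)
  · rw [← X_mul_X_mul_X_pow_eq_expMonomial]
    refine X_mul_X_mul_X_sq_mem_quadSpace_mul_self hij ?_
    rcases hij.lt_or_gt with h | h
    · exact hminors i j h
    · exact fun h0 => hminors j i h (by linear_combination -h0)

theorem quadSpace_mul_self_eq {a b : Fin 4 → K}
    (hminors : ∀ i j : Fin 4, i < j → a i * b j - a j * b i ≠ 0) :
    quadSpace a b * quadSpace a b = mixedQuarticSpan ⊔
      span K (Set.range (diagFormProducts a b)) := by
  refine le_antisymm (quadSpace_mul_self_le a b)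
    (sup_le (mixedQuarticSpan_le_quadSpace_mul_self hminors) ?_)
  have hF := diagForm_left_mem_quadSpace a b
  have hG := diagForm_right_mem_quadSpace a b
  rw [span_le, Set.range_subset_iff]
  intro j
  fin_cases j
  · exact mul_mem_mul hF hF
  · exact mul_mem_mul hG hG
  · exact mul_mem_mul hF hG

theorem finrank_quadSpace_mul_self {a b : Fin 4 → K}
    (hminors : ∀ i j : Fin 4, i < j → a i * b j - a j * b i ≠ 0)
    (hrank : (Matrix.of ![fun i => a i ^ 2, fun i => b i ^ 2,
        fun i => a i * b i] : Matrix (Fin 3) (Fin 4) K).rank = 3) :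
    Module.finrank K ↥(quadSpace a b * quadSpace a b) = 34 := by
  rw [quadSpace_mul_self_eq hminors, mixedQuarticSpan,
    finrank_span_image_expMonomial_sup _ (φ := purePowCoeffs 4), card_mixedQuarticExps]
  · rfl
  · intro d hd
    ext i
    simp [purePowCoeffs, expCoeff_expMonomial, ne_single_four_of_mem_mixedQuarticExps d hd i]
  · have hcomp : purePowCoeffs 4 ∘ diagFormProducts a b =
        (Matrix.of ![fun i => a i ^ 2, fun i => b i ^ 2, fun i => a i * b i]).row := by
      ext j : 1
      fin_cases j <;> ext i <;> simp [diagFormProducts, purePowCoeffs_diagForm_mul, sq]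
    rw [hcomp]
    exact linearIndependent_row_of_rank_eq_card (by simpa using hrank)

end FourVariables

end DiagonalQuadrics

open DiagonalQuadrics

theorem stmt_19_general (K : Type*) [Field K]
    (a b : Fin 4 → K)
    (F G : MvPolynomial (Fin 4) K)
    (hF : F = ∑ i : Fin 4, C (a i) * X i ^ 2)
    (hG : G = ∑ i : Fin 4, C (b i) * X i ^ 2)
    (W0 W : Submodule K (MvPolynomial (Fin 4) K))
    (hW0 : W0 = Submodule.span K
      {p : MvPolynomial (Fin 4) K | ∃ i j : Fin 4, i < j ∧ p = X i * X j})
    (hW : W = W0 ⊔ Submodule.span K {F, G})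
    (hminors : ∀ i j : Fin 4, i < j → a i * b j - a j * b i ≠ 0)
    (hrank : (Matrix.of ![fun i => a i ^ 2, fun i => b i ^ 2,
        fun i => a i * b i] : Matrix (Fin 3) (Fin 4) K).rank = 3) :
    Module.finrank K ↥W = 8 ∧ Module.finrank K ↥(W * W) = 34 := by
  subst hF hG hW0 hW
  exact ⟨finrank_quadSpace (hminors 0 1 (by decide)), finrank_quadSpace_mul_self hminors hrank⟩

theorem stmt_19 (K : Type*) [Field K] (hchar : (2 : K) ≠ 0)
    (a b : Fin 4 → K)
    (F G : MvPolynomial (Fin 4) K)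
    (hF : F = ∑ i : Fin 4, C (a i) * X i ^ 2)
    (hG : G = ∑ i : Fin 4, C (b i) * X i ^ 2)
    (W0 W : Submodule K (MvPolynomial (Fin 4) K))
    (hW0 : W0 = Submodule.span K
      {p : MvPolynomial (Fin 4) K | ∃ i j : Fin 4, i < j ∧ p = X i * X j})
    (hW : W = W0 ⊔ Submodule.span K {F, G})
    (hminors : ∀ i j : Fin 4, i < j → a i * b j - a j * b i ≠ 0)
    (hrank : (Matrix.of ![fun i => a i ^ 2, fun i => b i ^ 2,
        fun i => a i * b i] : Matrix (Fin 3) (Fin 4) K).rank = 3) :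
    Module.finrank K ↥W = 8 ∧ Module.finrank K ↥(W * W) = 34 :=
  stmt_19_general K a b F G hF hG W0 W hW0 hW hminors hrank
end
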